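/- arXiv:2502.06726 — 4 statements merged into one kernel-verified Lean document; each statement's English description precedes it below -/
import Mathlib

section
/- Let p ≥ 2, T > 0, c ≥ 0, and suppose X : [0,T] → ℝᵈ satisfies ‖X_t − X_s‖ ≤ Σ_{i=1}^n ‖Y^i_t − Y^i_s‖·‖Ỹ^i_t − Ỹ^i_s‖ + Σ_{j=1}^m ‖Z^j_t − Z^j_s‖ + c|t−s| for all s,t ∈ [0,T], where Y^i, Ỹ^i have finite p-variation and Z^j have finite p/2-variation. Then there is a constant C depending only on m, n, p such that ‖X‖_{p/2} ≤ C(Σ_{i=1}^n ‖Y^i‖_p ‖Ỹ^i‖_p + Σ_{j=1}^m ‖Z^j‖_{p/2} + c·T). -/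
open Set

noncomputable section

/-- A partition of `[s,t]` given by a monotone sequence `u` with `u 0 = s` and `u n = t`. -/
def IsPartition (s t : ℝ) (u : ℕ → ℝ) (n : ℕ) : Prop :=
  Monotone u ∧ u 0 = s ∧ u n = t

/-- The set of sums `Σ ‖X_{u_{i+1}} - X_{u_i}‖^q` over partitions of `[s,t]`. -/
def pVarSums {E : Type*} [NormedAddCommGroup E] (q s t : ℝ) (X : ℝ → E) : Set ℝ :=
  {v | ∃ n u, IsPartition s t u n ∧
    v = ∑ i ∈ Finset.range n, ‖X (u (i + 1)) - X (u i)‖ ^ q}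

/-- The `q`-variation of `X` on `[s,t]`. -/
def pVar {E : Type*} [NormedAddCommGroup E] (q s t : ℝ) (X : ℝ → E) : ℝ :=
  (sSup (pVarSums q s t X)) ^ (1 / q)

private lemma myrpow_add_le {q a b : ℝ} (hq : 1 ≤ q) (ha : 0 ≤ a) (hb : 0 ≤ b) :
    a ^ q + b ^ q ≤ (a + b) ^ q := by
  have h := NNReal.add_rpow_le_rpow_add a.toNNReal b.toNNReal hq
  have h2 := NNReal.coe_le_coe.2 h
  simpa [NNReal.coe_rpow, Real.coe_toNNReal _ ha, Real.coe_toNNReal _ hb,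
    Real.coe_toNNReal _ (add_nonneg ha hb), ← Real.toNNReal_add ha hb] using h2

private lemma myadd3_rpow_le {q a b c : ℝ} (hq : 1 ≤ q) (ha : 0 ≤ a) (hb : 0 ≤ b) (hc : 0 ≤ c) :
    a ^ q + b ^ q + c ^ q ≤ (a + b + c) ^ q := by
  calc a ^ q + b ^ q + c ^ q ≤ (a + b) ^ q + c ^ q := by
        have := myrpow_add_le hq ha hb; linarith
    _ ≤ (a + b + c) ^ q := myrpow_add_le hq (add_nonneg ha hb) hc

private lemma mysum_rpow_le {ι : Type*} (s : Finset ι) (f : ι → ℝ) {q : ℝ} (hq : 1 ≤ q) :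
    (∀ i ∈ s, 0 ≤ f i) → ∑ i ∈ s, f i ^ q ≤ (∑ i ∈ s, f i) ^ q := by
  classical
  induction s using Finset.induction_on with
  | empty => intro _; simp [Real.zero_rpow (by positivity : q ≠ 0)]
  | @insert a s ha ih =>
    intro hf
    have h1 : 0 ≤ f a := hf a (by simp)
    have h2 : ∀ i ∈ s, 0 ≤ f i := fun i hi => hf i (by simp [hi])
    rw [Finset.sum_insert ha, Finset.sum_insert ha]
    calc f a ^ q + ∑ i ∈ s, f i ^ q ≤ f a ^ q + (∑ i ∈ s, f i) ^ q := by
          have := ih h2; linarith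
      _ ≤ (f a + ∑ i ∈ s, f i) ^ q := myrpow_add_le hq h1 (Finset.sum_nonneg h2)

private lemma myrpow_sum_le {ι : Type*} (s : Finset ι) (f : ι → ℝ) {q : ℝ} (hq : 0 < q)
    (hf : ∀ i ∈ s, 0 ≤ f i) :
    (∑ i ∈ s, f i) ^ q ≤ (s.card : ℝ) ^ q * ∑ i ∈ s, f i ^ q := by
  have hS : 0 ≤ ∑ i ∈ s, f i ^ q :=
    Finset.sum_nonneg fun i hi => Real.rpow_nonneg (hf i hi) q
  have hstep : ∀ i ∈ s, f i ≤ (∑ j ∈ s, f j ^ q) ^ q⁻¹ := by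
    intro i hi
    have h1 : f i ^ q ≤ ∑ j ∈ s, f j ^ q :=
      Finset.single_le_sum (fun j hj => Real.rpow_nonneg (hf j hj) q) hi
    have h2 := Real.rpow_le_rpow (Real.rpow_nonneg (hf i hi) q) h1
      (by positivity : (0:ℝ) ≤ q⁻¹)
    rwa [Real.rpow_rpow_inv (hf i hi) hq.ne'] at h2
  have hsum : ∑ i ∈ s, f i ≤ (s.card : ℝ) * (∑ j ∈ s, f j ^ q) ^ q⁻¹ := by
    have := Finset.sum_le_card_nsmul s f _ hstep
    simpa [nsmul_eq_mul] using this
  calc (∑ i ∈ s, f i) ^ q ≤ ((s.card : ℝ) * (∑ j ∈ s, f j ^ q) ^ q⁻¹) ^ q :=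
        Real.rpow_le_rpow (Finset.sum_nonneg hf) hsum hq.le
    _ = (s.card : ℝ) ^ q * ∑ i ∈ s, f i ^ q := by
        rw [Real.mul_rpow (by positivity) (Real.rpow_nonneg hS _),
          Real.rpow_inv_rpow hS hq.ne']

private lemma myrpow_add3_le {q a b c : ℝ} (hq : 0 < q) (ha : 0 ≤ a) (hb : 0 ≤ b) (hc : 0 ≤ c) :
    (a + b + c) ^ q ≤ 3 ^ q * (a ^ q + b ^ q + c ^ q) := by
  have := myrpow_sum_le (Finset.univ : Finset (Fin 3)) ![a, b, c] hq
    (by intro i _; fin_cases i <;> simpa)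
  simpa [Fin.sum_univ_three] using this

private lemma mycs {N : ℕ} (f g : ℕ → ℝ) (hf : ∀ i, 0 ≤ f i) (hg : ∀ i, 0 ≤ g i) {q : ℝ} :
    ∑ i ∈ Finset.range N, (f i * g i) ^ q ≤
      (∑ i ∈ Finset.range N, f i ^ (2*q)) ^ (1/2:ℝ) *
        (∑ i ∈ Finset.range N, g i ^ (2*q)) ^ (1/2:ℝ) := by
  have hF : 0 ≤ ∑ i ∈ Finset.range N, f i ^ (2*q) :=
    Finset.sum_nonneg fun i _ => Real.rpow_nonneg (hf i) _
  have hA : 0 ≤ ∑ i ∈ Finset.range N, (f i * g i) ^ q :=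
    Finset.sum_nonneg fun i _ => Real.rpow_nonneg (mul_nonneg (hf i) (hg i)) _
  have hsq : ∀ (h : ℕ → ℝ), (∀ i, 0 ≤ h i) → ∀ i, (h i ^ q) ^ 2 = h i ^ (2*q) := by
    intro h hh i
    rw [← Real.rpow_natCast (h i ^ q) 2, ← Real.rpow_mul (hh i)]
    norm_num [mul_comm]
  have hCS := Finset.sum_mul_sq_le_sq_mul_sq (Finset.range N)
    (fun i => f i ^ q) (fun i => g i ^ q)
  simp only [hsq f hf, hsq g hg] at hCS
  have hmul : ∀ i, (f i * g i) ^ q = f i ^ q * g i ^ q := fun i =>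
    Real.mul_rpow (hf i) (hg i)
  calc ∑ i ∈ Finset.range N, (f i * g i) ^ q
      = Real.sqrt ((∑ i ∈ Finset.range N, (f i * g i) ^ q) ^ 2) := (Real.sqrt_sq hA).symm
    _ ≤ Real.sqrt ((∑ i ∈ Finset.range N, f i ^ (2*q)) * ∑ i ∈ Finset.range N, g i ^ (2*q)) := by
        apply Real.sqrt_le_sqrt
        simpa only [hmul] using hCS
    _ = _ := by
        rw [Real.sqrt_mul hF, Real.sqrt_eq_rpow, Real.sqrt_eq_rpow]

/-- If
`‖X_{s,t}‖ ≤ Σᵢ ‖Y^i_{s,t}‖·‖Ỹ^i_{s,t}‖ + Σⱼ ‖Z^j_{s,t}‖ + c|t-s|` for all `s,t ∈ [0,T]`,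
with `Y^i, Ỹ^i` of finite `p`-variation and `Z^j` of finite `p/2`-variation (`p ≥ 2`, `c ≥ 0`),
then there is a constant `C` depending only on `m`, `n`, `p` with
`‖X‖_{p/2} ≤ C (Σᵢ ‖Y^i‖_p ‖Ỹ^i‖_p + Σⱼ ‖Z^j‖_{p/2} + c·T)`. -/
theorem stmt4 (d n m : ℕ) (p : ℝ) (hp : 2 ≤ p) :
    ∃ C : ℝ, 0 < C ∧
      ∀ (T c : ℝ), 0 < T → 0 ≤ c →
      ∀ (X : ℝ → EuclideanSpace ℝ (Fin d))
        (Y Ytil : Fin n → ℝ → EuclideanSpace ℝ (Fin d))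
        (Z : Fin m → ℝ → EuclideanSpace ℝ (Fin d)),
        (∀ i, BddAbove (pVarSums p 0 T (Y i))) →
        (∀ i, BddAbove (pVarSums p 0 T (Ytil i))) →
        (∀ j, BddAbove (pVarSums (p / 2) 0 T (Z j))) →
        (∀ s ∈ Set.Icc (0 : ℝ) T, ∀ t ∈ Set.Icc (0 : ℝ) T,
          ‖X t - X s‖ ≤ ∑ i, ‖Y i t - Y i s‖ * ‖Ytil i t - Ytil i s‖
            + ∑ j, ‖Z j t - Z j s‖ + c * |t - s|) →
        pVar (p / 2) 0 T X ≤
          C * (∑ i, pVar p 0 T (Y i) * pVar p 0 T (Ytil i)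
            + ∑ j, pVar (p / 2) 0 T (Z j) + c * T) := by
  have hp0 : (0:ℝ) < p := by linarith
  refine ⟨3 * ((n:ℝ) + m + 1), by positivity, ?_⟩
  intro T c hT hc X Y Ytil Z hBY hBYt hBZ hX
  set q : ℝ := p / 2 with hqdef
  have hq0 : (0:ℝ) < q := by rw [hqdef]; linarith
  have hq1 : (1:ℝ) ≤ q := by rw [hqdef]; linarith
  -- nonnegativity facts
  have hmemnn : ∀ (r : ℝ) (W : ℝ → EuclideanSpace ℝ (Fin d)),
      ∀ x ∈ pVarSums r 0 T W, 0 ≤ x := by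
    rintro r W x ⟨N, u, hu, rfl⟩
    exact Finset.sum_nonneg fun i _ => Real.rpow_nonneg (norm_nonneg _) _
  have hSnn : ∀ (r : ℝ) (W : ℝ → EuclideanSpace ℝ (Fin d)),
      0 ≤ sSup (pVarSums r 0 T W) :=
    fun r W => Real.sSup_nonneg (hmemnn r W)
  have hVnn : ∀ (r : ℝ) (W : ℝ → EuclideanSpace ℝ (Fin d)), 0 ≤ pVar r 0 T W :=
    fun r W => Real.rpow_nonneg (hSnn r W) _
  set P : ℝ := ∑ i, pVar p 0 T (Y i) * pVar p 0 T (Ytil i) with hPdef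
  set Q : ℝ := ∑ j, pVar q 0 T (Z j) with hQdef
  have hP0 : 0 ≤ P := Finset.sum_nonneg fun i _ => mul_nonneg (hVnn _ _) (hVnn _ _)
  have hQ0 : 0 ≤ Q := Finset.sum_nonneg fun j _ => hVnn _ _
  set K : ℝ := (n:ℝ) + m + 1 with hKdef
  have hK1 : (1:ℝ) ≤ K := by
    have h1 : (0:ℝ) ≤ (n:ℝ) + m := by positivity
    rw [hKdef]; linarith
  have hR0 : 0 ≤ P + Q + c * T := by
    have := mul_nonneg hc hT.le; linarith
  have hCR : 0 ≤ 3 * K * (P + Q + c * T) := by positivity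
  have key : sSup (pVarSums q 0 T X) ≤ (3 * K * (P + Q + c * T)) ^ q := by
    apply Real.sSup_le _ (Real.rpow_nonneg hCR _)
    rintro v ⟨N, u, hu, rfl⟩
    have huIcc : ∀ i, i ≤ N → u i ∈ Icc (0:ℝ) T := fun i hi =>
      ⟨hu.2.1 ▸ hu.1 (Nat.zero_le i), hu.2.2 ▸ hu.1 hi⟩
    have hΔ : ∀ i, 0 ≤ u (i+1) - u i := fun i => sub_nonneg.2 (hu.1 (Nat.le_succ i))
    -- step 1: pointwise bound + split into three sums
    have h1 : ∑ i ∈ Finset.range N, ‖X (u (i+1)) - X (u i)‖ ^ q ≤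
        3 ^ q * ((∑ i ∈ Finset.range N,
            (∑ i', ‖Y i' (u (i+1)) - Y i' (u i)‖ * ‖Ytil i' (u (i+1)) - Ytil i' (u i)‖) ^ q)
          + (∑ i ∈ Finset.range N, (∑ j, ‖Z j (u (i+1)) - Z j (u i)‖) ^ q)
          + (∑ i ∈ Finset.range N, (c * (u (i+1) - u i)) ^ q)) := by
      calc ∑ i ∈ Finset.range N, ‖X (u (i+1)) - X (u i)‖ ^ q
          ≤ ∑ i ∈ Finset.range N, 3 ^ q *
            ((∑ i', ‖Y i' (u (i+1)) - Y i' (u i)‖ * ‖Ytil i' (u (i+1)) - Ytil i' (u i)‖) ^ q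
              + (∑ j, ‖Z j (u (i+1)) - Z j (u i)‖) ^ q
              + (c * (u (i+1) - u i)) ^ q) := by
            apply Finset.sum_le_sum
            intro i hi
            have hiN : i + 1 ≤ N := Finset.mem_range.1 hi
            have hXb := hX (u i) (huIcc i (by omega)) (u (i+1)) (huIcc (i+1) hiN)
            rw [abs_of_nonneg (hΔ i)] at hXb
            have hA : 0 ≤ ∑ i', ‖Y i' (u (i+1)) - Y i' (u i)‖ *
                ‖Ytil i' (u (i+1)) - Ytil i' (u i)‖ :=
              Finset.sum_nonneg fun _ _ => mul_nonneg (norm_nonneg _) (norm_nonneg _)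
            have hB : 0 ≤ ∑ j, ‖Z j (u (i+1)) - Z j (u i)‖ :=
              Finset.sum_nonneg fun _ _ => norm_nonneg _
            have hE : 0 ≤ c * (u (i+1) - u i) := mul_nonneg hc (hΔ i)
            calc ‖X (u (i+1)) - X (u i)‖ ^ q
                ≤ ((∑ i', ‖Y i' (u (i+1)) - Y i' (u i)‖ * ‖Ytil i' (u (i+1)) - Ytil i' (u i)‖)
                    + (∑ j, ‖Z j (u (i+1)) - Z j (u i)‖) + c * (u (i+1) - u i)) ^ q :=
                  Real.rpow_le_rpow (norm_nonneg _) hXb hq0.le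
              _ ≤ _ := myrpow_add3_le hq0 hA hB hE
        _ = _ := by
            rw [← Finset.mul_sum, Finset.sum_add_distrib, Finset.sum_add_distrib]
    -- step 2: the Y-part
    have h2 : ∑ i ∈ Finset.range N,
        (∑ i', ‖Y i' (u (i+1)) - Y i' (u i)‖ * ‖Ytil i' (u (i+1)) - Ytil i' (u i)‖) ^ q
        ≤ (n:ℝ) ^ q * P ^ q := by
      have hper : ∀ i' : Fin n, ∑ i ∈ Finset.range N,
          (‖Y i' (u (i+1)) - Y i' (u i)‖ * ‖Ytil i' (u (i+1)) - Ytil i' (u i)‖) ^ q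
          ≤ (pVar p 0 T (Y i') * pVar p 0 T (Ytil i')) ^ q := by
        intro i'
        have hcs := mycs (N := N) (fun i => ‖Y i' (u (i+1)) - Y i' (u i)‖)
          (fun i => ‖Ytil i' (u (i+1)) - Ytil i' (u i)‖)
          (fun i => norm_nonneg _) (fun i => norm_nonneg _) (q := q)
        have h2q : 2 * q = p := by rw [hqdef]; ring
        rw [h2q] at hcs
        have hFY : ∑ i ∈ Finset.range N, ‖Y i' (u (i+1)) - Y i' (u i)‖ ^ p
            ≤ sSup (pVarSums p 0 T (Y i')) := le_csSup (hBY i') ⟨N, u, hu, rfl⟩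
        have hFYt : ∑ i ∈ Finset.range N, ‖Ytil i' (u (i+1)) - Ytil i' (u i)‖ ^ p
            ≤ sSup (pVarSums p 0 T (Ytil i')) := le_csSup (hBYt i') ⟨N, u, hu, rfl⟩
        have hv : ∀ (W : ℝ → EuclideanSpace ℝ (Fin d)),
            pVar p 0 T W ^ q = sSup (pVarSums p 0 T W) ^ (1/2:ℝ) := by
          intro W
          rw [pVar, ← Real.rpow_mul (hSnn p W)]
          congr 1
          rw [hqdef]
          field_simp
        calc ∑ i ∈ Finset.range N,
            (‖Y i' (u (i+1)) - Y i' (u i)‖ * ‖Ytil i' (u (i+1)) - Ytil i' (u i)‖) ^ q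
            ≤ (∑ i ∈ Finset.range N, ‖Y i' (u (i+1)) - Y i' (u i)‖ ^ p) ^ (1/2:ℝ) *
              (∑ i ∈ Finset.range N, ‖Ytil i' (u (i+1)) - Ytil i' (u i)‖ ^ p) ^ (1/2:ℝ) := hcs
          _ ≤ sSup (pVarSums p 0 T (Y i')) ^ (1/2:ℝ) *
              sSup (pVarSums p 0 T (Ytil i')) ^ (1/2:ℝ) := by
              apply mul_le_mul
              · exact Real.rpow_le_rpow (Finset.sum_nonneg fun i _ =>
                  Real.rpow_nonneg (norm_nonneg _) _) hFY (by norm_num)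
              · exact Real.rpow_le_rpow (Finset.sum_nonneg fun i _ =>
                  Real.rpow_nonneg (norm_nonneg _) _) hFYt (by norm_num)
              · exact Real.rpow_nonneg (Finset.sum_nonneg fun i _ =>
                  Real.rpow_nonneg (norm_nonneg _) _) _
              · exact Real.rpow_nonneg (hSnn _ _) _
          _ = (pVar p 0 T (Y i') * pVar p 0 T (Ytil i')) ^ q := by
              rw [Real.mul_rpow (hVnn _ _) (hVnn _ _), hv (Y i'), hv (Ytil i')]
      calc ∑ i ∈ Finset.range N,
          (∑ i', ‖Y i' (u (i+1)) - Y i' (u i)‖ * ‖Ytil i' (u (i+1)) - Ytil i' (u i)‖) ^ q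
          ≤ ∑ i ∈ Finset.range N, (n:ℝ) ^ q * ∑ i',
            (‖Y i' (u (i+1)) - Y i' (u i)‖ * ‖Ytil i' (u (i+1)) - Ytil i' (u i)‖) ^ q := by
            apply Finset.sum_le_sum
            intro i _
            have := myrpow_sum_le (Finset.univ : Finset (Fin n))
              (fun i' => ‖Y i' (u (i+1)) - Y i' (u i)‖ * ‖Ytil i' (u (i+1)) - Ytil i' (u i)‖)
              hq0 (fun i' _ => mul_nonneg (norm_nonneg _) (norm_nonneg _))
            simpa using this
        _ = (n:ℝ) ^ q * ∑ i', ∑ i ∈ Finset.range N,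
            (‖Y i' (u (i+1)) - Y i' (u i)‖ * ‖Ytil i' (u (i+1)) - Ytil i' (u i)‖) ^ q := by
            rw [← Finset.mul_sum, Finset.sum_comm]
        _ ≤ (n:ℝ) ^ q * ∑ i', (pVar p 0 T (Y i') * pVar p 0 T (Ytil i')) ^ q := by
            apply mul_le_mul_of_nonneg_left _ (Real.rpow_nonneg (Nat.cast_nonneg n) q)
            exact Finset.sum_le_sum fun i' _ => hper i'
        _ ≤ (n:ℝ) ^ q * P ^ q := by
            apply mul_le_mul_of_nonneg_left _ (Real.rpow_nonneg (Nat.cast_nonneg n) q)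
            rw [hPdef]
            exact mysum_rpow_le _ _ hq1 fun i' _ => mul_nonneg (hVnn _ _) (hVnn _ _)
    -- step 3: the Z-part
    have h3 : ∑ i ∈ Finset.range N, (∑ j, ‖Z j (u (i+1)) - Z j (u i)‖) ^ q
        ≤ (m:ℝ) ^ q * Q ^ q := by
      have hv : ∀ j, pVar q 0 T (Z j) ^ q = sSup (pVarSums q 0 T (Z j)) := by
        intro j
        rw [pVar, one_div, Real.rpow_inv_rpow (hSnn q (Z j)) hq0.ne']
      calc ∑ i ∈ Finset.range N, (∑ j, ‖Z j (u (i+1)) - Z j (u i)‖) ^ q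
          ≤ ∑ i ∈ Finset.range N, (m:ℝ) ^ q * ∑ j, ‖Z j (u (i+1)) - Z j (u i)‖ ^ q := by
            apply Finset.sum_le_sum
            intro i _
            have := myrpow_sum_le (Finset.univ : Finset (Fin m))
              (fun j => ‖Z j (u (i+1)) - Z j (u i)‖) hq0 (fun j _ => norm_nonneg _)
            simpa using this
        _ = (m:ℝ) ^ q * ∑ j, ∑ i ∈ Finset.range N, ‖Z j (u (i+1)) - Z j (u i)‖ ^ q := by
            rw [← Finset.mul_sum, Finset.sum_comm]
        _ ≤ (m:ℝ) ^ q * ∑ j, pVar q 0 T (Z j) ^ q := by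
            apply mul_le_mul_of_nonneg_left _ (Real.rpow_nonneg (Nat.cast_nonneg m) q)
            apply Finset.sum_le_sum
            intro j _
            rw [hv j]
            exact le_csSup (hBZ j) ⟨N, u, hu, rfl⟩
        _ ≤ (m:ℝ) ^ q * Q ^ q := by
            apply mul_le_mul_of_nonneg_left _ (Real.rpow_nonneg (Nat.cast_nonneg m) q)
            rw [hQdef]
            exact mysum_rpow_le _ _ hq1 fun j _ => hVnn _ _
    -- step 4: the c-part
    have h4 : ∑ i ∈ Finset.range N, (c * (u (i+1) - u i)) ^ q ≤ (c * T) ^ q := by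
      calc ∑ i ∈ Finset.range N, (c * (u (i+1) - u i)) ^ q
          = c ^ q * ∑ i ∈ Finset.range N, (u (i+1) - u i) ^ q := by
            rw [Finset.mul_sum]
            exact Finset.sum_congr rfl fun i _ => Real.mul_rpow hc (hΔ i)
        _ ≤ c ^ q * (∑ i ∈ Finset.range N, (u (i+1) - u i)) ^ q := by
            apply mul_le_mul_of_nonneg_left _ (Real.rpow_nonneg hc q)
            exact mysum_rpow_le _ _ hq1 fun i _ => hΔ i
        _ = (c * T) ^ q := by
            rw [Finset.sum_range_sub u, hu.2.1, hu.2.2, sub_zero,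
              ← Real.mul_rpow hc hT.le]
    -- combine
    have hnK : ((n:ℝ)) ^ q ≤ K ^ q := by
      apply Real.rpow_le_rpow (Nat.cast_nonneg n) _ hq0.le
      rw [hKdef]; push_cast; linarith [Nat.cast_nonneg (α := ℝ) m]
    have hmK : ((m:ℝ)) ^ q ≤ K ^ q := by
      apply Real.rpow_le_rpow (Nat.cast_nonneg m) _ hq0.le
      rw [hKdef]; push_cast; linarith [Nat.cast_nonneg (α := ℝ) n]
    have h1K : (1:ℝ) ≤ K ^ q := by
      have := Real.rpow_le_rpow (by norm_num : (0:ℝ) ≤ 1) hK1 hq0.le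
      rwa [Real.one_rpow] at this
    have hPq : 0 ≤ P ^ q := Real.rpow_nonneg hP0 _
    have hQq : 0 ≤ Q ^ q := Real.rpow_nonneg hQ0 _
    have hcTq : 0 ≤ (c * T) ^ q := Real.rpow_nonneg (mul_nonneg hc hT.le) _
    have hfinal : (n:ℝ) ^ q * P ^ q + (m:ℝ) ^ q * Q ^ q + (c * T) ^ q
        ≤ K ^ q * (P + Q + c * T) ^ q := by
      calc (n:ℝ) ^ q * P ^ q + (m:ℝ) ^ q * Q ^ q + (c * T) ^ q
          ≤ K ^ q * P ^ q + K ^ q * Q ^ q + K ^ q * (c * T) ^ q := by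
            have e1 : (n:ℝ) ^ q * P ^ q ≤ K ^ q * P ^ q :=
              mul_le_mul_of_nonneg_right hnK hPq
            have e2 : (m:ℝ) ^ q * Q ^ q ≤ K ^ q * Q ^ q :=
              mul_le_mul_of_nonneg_right hmK hQq
            have e3 : (c * T) ^ q ≤ K ^ q * (c * T) ^ q :=
              le_mul_of_one_le_left hcTq h1K
            linarith
        _ = K ^ q * (P ^ q + Q ^ q + (c * T) ^ q) := by ring
        _ ≤ K ^ q * (P + Q + c * T) ^ q := by
            apply mul_le_mul_of_nonneg_left _ (by positivity)
            exact myadd3_rpow_le hq1 hP0 hQ0 (mul_nonneg hc hT.le)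
    calc ∑ i ∈ Finset.range N, ‖X (u (i+1)) - X (u i)‖ ^ q
        ≤ 3 ^ q * ((n:ℝ) ^ q * P ^ q + (m:ℝ) ^ q * Q ^ q + (c * T) ^ q) := by
          refine h1.trans ?_
          apply mul_le_mul_of_nonneg_left _ (by positivity)
          linarith [h2, h3, h4]
      _ ≤ 3 ^ q * (K ^ q * (P + Q + c * T) ^ q) := by
          apply mul_le_mul_of_nonneg_left hfinal (by positivity)
      _ = (3 * K * (P + Q + c * T)) ^ q := by
          rw [Real.mul_rpow (by positivity : (0:ℝ) ≤ 3 * K) hR0,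
            Real.mul_rpow (by norm_num : (0:ℝ) ≤ 3) (by positivity : (0:ℝ) ≤ K), mul_assoc]
  have hfin := Real.rpow_le_rpow (hSnn q X) key (by positivity : (0:ℝ) ≤ 1/q)
  rw [one_div, Real.rpow_rpow_inv hCR hq0.ne'] at hfin
  calc pVar q 0 T X = sSup (pVarSums q 0 T X) ^ (1/q) := rfl
    _ ≤ 3 * K * (P + Q + c * T) := by rw [one_div]; exact hfin
    _ = 3 * ((n:ℝ) + m + 1) * (P + Q + c * T) := by rw [hKdef]

end
end

section
/- Let σ ∈ C²_b([0,T]×ℝⁿ, ℝᵐ) and X, X̃ : [0,T] → ℝⁿ be continuous paths of finite p-variation (p ≥ 1). Then there is a constant C_p ≥ 1 such that ‖σ(·,X_·) − σ(·,X̃_·)‖_p ≤ C_p‖σ‖_{C²_b}(1 + ‖X‖_p + ‖X̃‖_p + T)(‖X₀ − X̃₀‖ + ‖X − X̃‖_p). -/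
open Set

set_option maxHeartbeats 1000000

noncomputable section

section helpers

lemma mem_pVarSums {E : Type*} [NormedAddCommGroup E] {q s t : ℝ} {X : ℝ → E}
    {n : ℕ} {u : ℕ → ℝ} (h : IsPartition s t u n) :
    (∑ i ∈ Finset.range n, ‖X (u (i + 1)) - X (u i)‖ ^ q) ∈ pVarSums q s t X :=
  ⟨n, u, h, rfl⟩

lemma isPartition_single {T : ℝ} (hT : 0 ≤ T) :
    IsPartition 0 T (fun i => if i = 0 then 0 else T) 1 := by
  refine ⟨?_, by simp, by simp⟩
  intro i j hij
  dsimp only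
  by_cases hi : i = 0
  · by_cases hj : j = 0 <;> simp [hi, hj, hT]
  · have hj : j ≠ 0 := by omega
    simp [hi, hj]

lemma isPartition_two {T s : ℝ} (h0 : 0 ≤ s) (h1 : s ≤ T) :
    IsPartition 0 T (fun i => if i = 0 then 0 else if i = 1 then s else T) 2 := by
  refine ⟨monotone_nat_of_le_succ ?_, by simp, by simp⟩
  intro i
  match i with
  | 0 => simpa using h0
  | 1 => simpa using h1
  | (k+2) => simp

lemma sum_rpow_nonneg {E : Type*} [NormedAddCommGroup E] (q : ℝ) (X : ℝ → E)
    (u : ℕ → ℝ) (n : ℕ) :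
    0 ≤ ∑ i ∈ Finset.range n, ‖X (u (i + 1)) - X (u i)‖ ^ q :=
  Finset.sum_nonneg fun i _ => Real.rpow_nonneg (norm_nonneg _) q

lemma two_rpow_aux {p : ℝ} (hp : 1 ≤ p) {a b : ℝ} (ha : 0 ≤ a) (hb : 0 ≤ b) :
    (a + b) ^ p ≤ 2 ^ p * (a ^ p + b ^ p) := by
  have hp0 : (0:ℝ) ≤ p := le_trans zero_le_one hp
  have h1 : (a + b) ^ p ≤ (2 * max a b) ^ p := by
    apply Real.rpow_le_rpow (by positivity) _ hp0
    rcases le_total a b with h | h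
    · simp [max_eq_right h]; linarith
    · simp [max_eq_left h]; linarith
  have h2 : (2 * max a b) ^ p = 2 ^ p * (max a b) ^ p :=
    Real.mul_rpow (by norm_num) (le_max_iff.2 (Or.inl ha))
  have h3 : (max a b) ^ p ≤ a ^ p + b ^ p := by
    rcases le_total a b with h | h
    · simp only [max_eq_right h]
      have := Real.rpow_nonneg ha p; linarith
    · simp only [max_eq_left h]
      have := Real.rpow_nonneg hb p; linarith
  calc (a + b) ^ p ≤ 2 ^ p * (max a b) ^ p := by rw [← h2]; exact h1
    _ ≤ 2 ^ p * (a ^ p + b ^ p) := by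
        have : (0:ℝ) ≤ 2 ^ p := Real.rpow_nonneg (by norm_num) p
        nlinarith

lemma sum_rpow_le_rpow_sum {p : ℝ} (hp : 1 ≤ p) (N : ℕ) (a : ℕ → ℝ)
    (ha : ∀ i, 0 ≤ a i) :
    ∑ i ∈ Finset.range N, (a i) ^ p ≤ (∑ i ∈ Finset.range N, a i) ^ p := by
  have hp0 : (0:ℝ) < p := lt_of_lt_of_le zero_lt_one hp
  set S := ∑ i ∈ Finset.range N, a i with hS
  have hS0 : 0 ≤ S := Finset.sum_nonneg fun i _ => ha i
  rcases eq_or_lt_of_le hS0 with h0 | hSpos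
  · have : ∀ i ∈ Finset.range N, a i = 0 := by
      intro i hi
      exact (Finset.sum_eq_zero_iff_of_nonneg (fun j _ => ha j)).1 h0.symm i hi
    rw [← h0, Real.zero_rpow hp0.ne']
    apply le_of_eq
    apply Finset.sum_eq_zero
    intro i hi
    rw [this i hi, Real.zero_rpow hp0.ne']
  · have key : ∀ i ∈ Finset.range N, (a i) ^ p ≤ a i * S ^ (p - 1) := by
      intro i hi
      rcases eq_or_lt_of_le (ha i) with h0 | hpos
      · rw [← h0, Real.zero_rpow hp0.ne', zero_mul]
      · have hle : a i ≤ S := Finset.single_le_sum (fun j _ => ha j) hi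
        calc (a i) ^ p = a i * (a i) ^ (p - 1) := by
              rw [← Real.rpow_one_add' (le_of_lt hpos) (by linarith)]; ring_nf
          _ ≤ a i * S ^ (p - 1) := by
              apply mul_le_mul_of_nonneg_left _ (le_of_lt hpos)
              exact Real.rpow_le_rpow (le_of_lt hpos) hle (by linarith)
    calc ∑ i ∈ Finset.range N, (a i) ^ p ≤ ∑ i ∈ Finset.range N, a i * S ^ (p-1) :=
          Finset.sum_le_sum key
      _ = S * S ^ (p - 1) := by rw [← Finset.sum_mul]
      _ = S ^ p := by rw [← Real.rpow_one_add' hS0 (by linarith)]; ring_nf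

lemma term_bound {p : ℝ} (hp : 1 ≤ p) {M d K τ x x' : ℝ}
    (hM : 0 ≤ M) (hd : 0 ≤ d) (hK : 0 ≤ K) (hτ : 0 ≤ τ) (hx : 0 ≤ x) (hx' : 0 ≤ x') :
    (M * d + M * ((τ + x) + (τ + x')) * K) ^ p ≤
      M ^ p * (2 ^ p * d ^ p + 8 ^ p * K ^ p * (τ ^ p + x ^ p + (τ ^ p + x' ^ p))) := by
  have hp0 : (0:ℝ) ≤ p := le_trans zero_le_one hp
  set q : ℝ := (τ + x) + (τ + x') with hq
  have hq0 : 0 ≤ q := by positivity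
  have e1 : M * d + M * q * K = M * (d + q * K) := by ring
  have e2 : (M * (d + q * K)) ^ p = M ^ p * (d + q * K) ^ p :=
    Real.mul_rpow hM (by positivity)
  have h3 : (d + q * K) ^ p ≤ 2 ^ p * (d ^ p + q ^ p * K ^ p) := by
    have := two_rpow_aux hp hd (mul_nonneg hq0 hK)
    rwa [Real.mul_rpow hq0 hK] at this
  have h4 : q ^ p ≤ 4 ^ p * (τ ^ p + x ^ p + (τ ^ p + x' ^ p)) := by
    have ha := two_rpow_aux hp (by positivity : (0:ℝ) ≤ τ + x) (by positivity : (0:ℝ) ≤ τ + x')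
    have hb := two_rpow_aux hp hτ hx
    have hc := two_rpow_aux hp hτ hx'
    have h2p : (0:ℝ) ≤ 2 ^ p := Real.rpow_nonneg (by norm_num) p
    have e4 : (4:ℝ) ^ p = 2 ^ p * 2 ^ p := by
      rw [← Real.mul_rpow (by norm_num) (by norm_num)]; norm_num
    rw [hq, e4]; nlinarith
  have h24 : (2:ℝ) ^ p * (4 ^ p * K ^ p) = 8 ^ p * K ^ p := by
    rw [← mul_assoc, ← Real.mul_rpow (by norm_num) (by norm_num)]; norm_num
  have h2p : (0:ℝ) ≤ 2 ^ p := Real.rpow_nonneg (by norm_num) p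
  have hKp : (0:ℝ) ≤ K ^ p := Real.rpow_nonneg hK p
  have hMp : (0:ℝ) ≤ M ^ p := Real.rpow_nonneg hM p
  calc (M * d + M * q * K) ^ p = M ^ p * (d + q * K) ^ p := by rw [e1, e2]
    _ ≤ M ^ p * (2 ^ p * (d ^ p + q ^ p * K ^ p)) := mul_le_mul_of_nonneg_left h3 hMp
    _ ≤ M ^ p * (2 ^ p * (d ^ p + (4 ^ p * (τ ^ p + x ^ p + (τ ^ p + x' ^ p))) * K ^ p)) := by
        have h5 : q ^ p * K ^ p ≤ (4 ^ p * (τ ^ p + x ^ p + (τ ^ p + x' ^ p))) * K ^ p :=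
          mul_le_mul_of_nonneg_right h4 hKp
        exact mul_le_mul_of_nonneg_left
          (mul_le_mul_of_nonneg_left (add_le_add le_rfl h5) h2p) hMp
    _ = M ^ p * (2 ^ p * d ^ p + 8 ^ p * K ^ p * (τ ^ p + x ^ p + (τ ^ p + x' ^ p))) := by
        rw [← h24]; ring

lemma key_second_order {E F : Type*} [NormedAddCommGroup E] [NormedSpace ℝ E]
    [NormedAddCommGroup F] [NormedSpace ℝ F]
    (σ : E → F) (hσ : Differentiable ℝ σ) {M : ℝ}
    (h1 : ∀ z, ‖fderiv ℝ σ z‖ ≤ M)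
    (h2 : ∀ a b, ‖fderiv ℝ σ a - fderiv ℝ σ b‖ ≤ M * ‖a - b‖)
    (A B A' B' : E) :
    ‖σ A - σ B - (σ A' - σ B')‖ ≤
      M * ‖A - B - (A' - B')‖ + M * (‖A - A'‖ + ‖B - B'‖) * ‖A' - B'‖ := by
  have hM : 0 ≤ M := le_trans (norm_nonneg _) (h1 A)
  set g : ℝ → E := fun θ => B + θ • (A - B) with hg
  set g' : ℝ → E := fun θ => B' + θ • (A' - B') with hg'
  set h : ℝ → F := fun θ => σ (g θ) - σ (g' θ) with hh
  set D : ℝ → F := fun θ => fderiv ℝ σ (g θ) (A - B) - fderiv ℝ σ (g' θ) (A' - B') with hD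
  set C : ℝ := M * ‖A - B - (A' - B')‖ + M * (‖A - A'‖ + ‖B - B'‖) * ‖A' - B'‖ with hC
  have hderiv : ∀ θ ∈ Icc (0:ℝ) 1, HasDerivWithinAt h (D θ) (Icc 0 1) θ := by
    intro θ _
    have hgd : HasDerivAt g (A - B) θ := by
      have := ((hasDerivAt_id θ).smul_const (A - B)).const_add B
      simp only [one_smul] at this; exact this
    have hgd' : HasDerivAt g' (A' - B') θ := by
      have := ((hasDerivAt_id θ).smul_const (A' - B')).const_add B'
      simp only [one_smul] at this; exact this
    have H1 : HasDerivAt (fun θ => σ (g θ)) (fderiv ℝ σ (g θ) (A - B)) θ :=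
      (hσ (g θ)).hasFDerivAt.comp_hasDerivAt θ hgd
    have H2 : HasDerivAt (fun θ => σ (g' θ)) (fderiv ℝ σ (g' θ) (A' - B')) θ :=
      (hσ (g' θ)).hasFDerivAt.comp_hasDerivAt θ hgd'
    exact (H1.sub H2).hasDerivWithinAt
  have hbound : ∀ θ ∈ Ico (0:ℝ) 1, ‖D θ‖ ≤ C := by
    intro θ hθ
    obtain ⟨hθ0, hθ1⟩ := hθ
    have hθ1' : θ ≤ 1 := le_of_lt hθ1
    have e1 : D θ = fderiv ℝ σ (g θ) (A - B - (A' - B')) +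
        (fderiv ℝ σ (g θ) - fderiv ℝ σ (g' θ)) (A' - B') := by
      simp only [hD, map_sub, ContinuousLinearMap.sub_apply]
      abel
    have egg : g θ - g' θ = (1 - θ) • (B - B') + θ • (A - A') := by
      simp only [hg, hg']
      module
    have hzz : ‖g θ - g' θ‖ ≤ ‖A - A'‖ + ‖B - B'‖ := by
      rw [egg]
      calc ‖(1 - θ) • (B - B') + θ • (A - A')‖
          ≤ ‖(1 - θ) • (B - B')‖ + ‖θ • (A - A')‖ := norm_add_le _ _
        _ = (1 - θ) * ‖B - B'‖ + θ * ‖A - A'‖ := by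
            rw [norm_smul, norm_smul, Real.norm_eq_abs, Real.norm_eq_abs,
              abs_of_nonneg (by linarith), abs_of_nonneg hθ0]
        _ ≤ ‖A - A'‖ + ‖B - B'‖ := by
            nlinarith [norm_nonneg (B - B'), norm_nonneg (A - A')]
    rw [e1]
    calc ‖fderiv ℝ σ (g θ) (A - B - (A' - B')) +
          (fderiv ℝ σ (g θ) - fderiv ℝ σ (g' θ)) (A' - B')‖
        ≤ ‖fderiv ℝ σ (g θ) (A - B - (A' - B'))‖ +
          ‖(fderiv ℝ σ (g θ) - fderiv ℝ σ (g' θ)) (A' - B')‖ := norm_add_le _ _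
      _ ≤ ‖fderiv ℝ σ (g θ)‖ * ‖A - B - (A' - B')‖ +
          ‖fderiv ℝ σ (g θ) - fderiv ℝ σ (g' θ)‖ * ‖A' - B'‖ := by
          exact add_le_add (ContinuousLinearMap.le_opNorm _ _) (ContinuousLinearMap.le_opNorm _ _)
      _ ≤ M * ‖A - B - (A' - B')‖ + (M * (‖A - A'‖ + ‖B - B'‖)) * ‖A' - B'‖ := by
          exact add_le_add (mul_le_mul_of_nonneg_right (h1 _) (norm_nonneg _))
            (mul_le_mul_of_nonneg_right
              ((h2 _ _).trans (mul_le_mul_of_nonneg_left hzz hM)) (norm_nonneg _))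
      _ = C := by rw [hC]
  have := norm_image_sub_le_of_norm_deriv_le_segment' hderiv hbound 1 (by
    constructor <;> norm_num)
  have g1 : g 1 = A := by rw [hg]; module
  have g1' : g' 1 = A' := by rw [hg']; module
  have g0 : g 0 = B := by rw [hg]; module
  have g0' : g' 0 = B' := by rw [hg']; module
  have hfin : h 1 - h 0 = σ A - σ B - (σ A' - σ B') := by
    simp only [hh, g1, g1', g0, g0']
    abel
  calc ‖σ A - σ B - (σ A' - σ B')‖ = ‖h 1 - h 0‖ := by rw [hfin]
    _ ≤ C * (1 - 0) := this
    _ = C := by ring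

end helpers

/-- For `σ ∈ C²_b([0,T]×ℝⁿ, ℝᵐ)` with `‖σ‖_{C²_b} ≤ M` (sum of the sup
norms of `σ` and its derivatives up to order 2), and continuous paths `X, X̃` of finite
`p`-variation (`p ≥ 1`), there is a constant `C_p ≥ 1` depending only on `p` such that
`‖σ(·,X) − σ(·,X̃)‖_p ≤ C_p M (1 + ‖X‖_p + ‖X̃‖_p + T)(‖X₀ − X̃₀‖ + ‖X − X̃‖_p)`. -/
theorem stmt6 (n m : ℕ) (p : ℝ) (hp : 1 ≤ p) :
    ∃ C : ℝ, 1 ≤ C ∧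
      ∀ (T : ℝ), 0 < T →
      ∀ (σ : ℝ × EuclideanSpace ℝ (Fin n) → EuclideanSpace ℝ (Fin m))
        (X Xtil : ℝ → EuclideanSpace ℝ (Fin n)) (M : ℝ),
        ContDiff ℝ 2 σ →
        (∀ z, ‖σ z‖ + ‖iteratedFDeriv ℝ 1 σ z‖ + ‖iteratedFDeriv ℝ 2 σ z‖ ≤ M) →
        ContinuousOn X (Set.Icc 0 T) →
        ContinuousOn Xtil (Set.Icc 0 T) →
        BddAbove (pVarSums p 0 T X) →
        BddAbove (pVarSums p 0 T Xtil) →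
        pVar p 0 T (fun t => σ (t, X t) - σ (t, Xtil t)) ≤
          C * M * (1 + pVar p 0 T X + pVar p 0 T Xtil + T) *
            (‖X 0 - Xtil 0‖ + pVar p 0 T (fun t => X t - Xtil t)) := by

  have hp0 : (0:ℝ) < p := lt_of_lt_of_le zero_lt_one hp
  have hpn : (0:ℝ) ≤ p := hp0.le
  refine ⟨64, by norm_num, ?_⟩
  intro T hT σ X Xtil M hσ hMb hcX hcXt hbX hbXt
  -- derivative bounds
  have hM0 : 0 ≤ M := by
    have := hMb (0, 0)
    have h1 := norm_nonneg (σ (0, 0))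
    have h2 := norm_nonneg (iteratedFDeriv ℝ 1 σ (0, 0))
    have h3 := norm_nonneg (iteratedFDeriv ℝ 2 σ (0, 0))
    linarith
  have hσd : Differentiable ℝ σ := hσ.differentiable (by norm_num)
  have hM1 : ∀ z, ‖fderiv ℝ σ z‖ ≤ M := by
    intro z
    have e : ‖fderiv ℝ σ z‖ = ‖iteratedFDeriv ℝ 1 σ z‖ := by
      rw [← norm_iteratedFDeriv_fderiv, norm_iteratedFDeriv_zero]
    have := hMb z
    have h1 := norm_nonneg (σ z)
    have h3 := norm_nonneg (iteratedFDeriv ℝ 2 σ z)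
    rw [e]; linarith
  have hσd1 : ContDiff ℝ 1 (fderiv ℝ σ) := hσ.fderiv_right (by norm_num)
  have hM2' : ∀ z, ‖fderiv ℝ (fderiv ℝ σ) z‖ ≤ M := by
    intro z
    have e : ‖fderiv ℝ (fderiv ℝ σ) z‖ = ‖iteratedFDeriv ℝ 2 σ z‖ := by
      rw [← norm_iteratedFDeriv_fderiv (n := 1),
        ← norm_iteratedFDeriv_fderiv (n := 0), norm_iteratedFDeriv_zero]
    have := hMb z
    have h1 := norm_nonneg (σ z)
    have h2 := norm_nonneg (iteratedFDeriv ℝ 1 σ z)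
    rw [e]; linarith
  have hM2 : ∀ a b, ‖fderiv ℝ σ a - fderiv ℝ σ b‖ ≤ M * ‖a - b‖ := by
    intro a b
    exact Convex.norm_image_sub_le_of_norm_fderiv_le
      (fun x _ => (hσd1.differentiable (by norm_num) x))
      (fun x _ => hM2' x) convex_univ (mem_univ b) (mem_univ a)
  have key := key_second_order σ hσd hM1 hM2
  -- notation
  set Δ : ℝ → EuclideanSpace ℝ (Fin n) := fun t => X t - Xtil t with hΔdef
  set Y : ℝ → EuclideanSpace ℝ (Fin m) := fun t => σ (t, X t) - σ (t, Xtil t) with hYdef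
  set SX := sSup (pVarSums p 0 T X) with hSX
  set SXt := sSup (pVarSums p 0 T Xtil) with hSXt
  set SΔ := sSup (pVarSums p 0 T Δ) with hSΔ
  -- nonnegativity of suprema
  have hSXnn : 0 ≤ SX :=
    le_trans (sum_rpow_nonneg p X _ 1) (le_csSup hbX (mem_pVarSums (isPartition_single hT.le)))
  have hSXtnn : 0 ≤ SXt :=
    le_trans (sum_rpow_nonneg p Xtil _ 1)
      (le_csSup hbXt (mem_pVarSums (isPartition_single hT.le)))
  -- boundedness for Δ
  have hbΔ : BddAbove (pVarSums p 0 T Δ) := by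
    refine ⟨2 ^ p * (SX + SXt), ?_⟩
    rintro v ⟨N, u, hu, rfl⟩
    have step : ∀ i ∈ Finset.range N, ‖Δ (u (i+1)) - Δ (u i)‖ ^ p ≤
        2 ^ p * (‖X (u (i+1)) - X (u i)‖ ^ p + ‖Xtil (u (i+1)) - Xtil (u i)‖ ^ p) := by
      intro i _
      have e : Δ (u (i+1)) - Δ (u i) =
          (X (u (i+1)) - X (u i)) - (Xtil (u (i+1)) - Xtil (u i)) := by
        simp only [hΔdef]; abel
      have h1 : ‖Δ (u (i+1)) - Δ (u i)‖ ≤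
          ‖X (u (i+1)) - X (u i)‖ + ‖Xtil (u (i+1)) - Xtil (u i)‖ := by
        rw [e]; exact norm_sub_le _ _
      calc ‖Δ (u (i+1)) - Δ (u i)‖ ^ p
          ≤ (‖X (u (i+1)) - X (u i)‖ + ‖Xtil (u (i+1)) - Xtil (u i)‖) ^ p :=
            Real.rpow_le_rpow (norm_nonneg _) h1 hpn
        _ ≤ 2 ^ p * (‖X (u (i+1)) - X (u i)‖ ^ p + ‖Xtil (u (i+1)) - Xtil (u i)‖ ^ p) :=
            two_rpow_aux hp (norm_nonneg _) (norm_nonneg _)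
    calc ∑ i ∈ Finset.range N, ‖Δ (u (i+1)) - Δ (u i)‖ ^ p
        ≤ ∑ i ∈ Finset.range N,
            2 ^ p * (‖X (u (i+1)) - X (u i)‖ ^ p + ‖Xtil (u (i+1)) - Xtil (u i)‖ ^ p) :=
          Finset.sum_le_sum step
      _ = 2 ^ p * ((∑ i ∈ Finset.range N, ‖X (u (i+1)) - X (u i)‖ ^ p) +
            ∑ i ∈ Finset.range N, ‖Xtil (u (i+1)) - Xtil (u i)‖ ^ p) := by
          simp only [Finset.mul_sum, ← Finset.sum_add_distrib]
          try exact Finset.sum_congr rfl fun i _ => by ring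
      _ ≤ 2 ^ p * (SX + SXt) := by
          have hX' : (∑ i ∈ Finset.range N, ‖X (u (i+1)) - X (u i)‖ ^ p) ≤ SX :=
            le_csSup hbX (mem_pVarSums hu)
          have hXt' : (∑ i ∈ Finset.range N, ‖Xtil (u (i+1)) - Xtil (u i)‖ ^ p) ≤ SXt :=
            le_csSup hbXt (mem_pVarSums hu)
          have h2p : (0:ℝ) ≤ 2 ^ p := Real.rpow_nonneg (by norm_num) p
          nlinarith
  have hSΔnn : 0 ≤ SΔ :=
    le_trans (sum_rpow_nonneg p Δ _ 1)
      (le_csSup hbΔ (mem_pVarSums (isPartition_single hT.le)))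
  -- abbreviations
  set VX := SX ^ (1/p) with hVX
  set VXt := SXt ^ (1/p) with hVXt
  set VΔ := SΔ ^ (1/p) with hVΔ
  have hVXnn : 0 ≤ VX := Real.rpow_nonneg hSXnn _
  have hVXtnn : 0 ≤ VXt := Real.rpow_nonneg hSXtnn _
  have hVΔnn : 0 ≤ VΔ := Real.rpow_nonneg hSΔnn _
  set K := ‖X 0 - Xtil 0‖ + VΔ with hK
  have hKnn : 0 ≤ K := add_nonneg (norm_nonneg _) hVΔnn
  set W := 1 + VX + VXt + T with hW
  have hW1 : 1 ≤ W := by rw [hW]; linarith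
  have hWnn : (0:ℝ) ≤ W := by linarith
  -- recover suprema from pVar values
  have hpow : ∀ S : ℝ, 0 ≤ S → (S ^ (1/p)) ^ p = S := by
    intro S h
    rw [← Real.rpow_mul h, one_div_mul_cancel hp0.ne', Real.rpow_one]
  -- pointwise bound on Δ
  have hKpt : ∀ s, 0 ≤ s → s ≤ T → ‖Δ s‖ ≤ K := by
    intro s hs0 hsT
    have hmem := mem_pVarSums (X := Δ) (q := p) (isPartition_two hs0 hsT)
    have hval : (∑ i ∈ Finset.range 2,
        ‖Δ ((fun i => if i = 0 then 0 else if i = 1 then s else T) (i + 1)) -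
          Δ ((fun i => if i = 0 then 0 else if i = 1 then s else T) i)‖ ^ p)
        = ‖Δ s - Δ 0‖ ^ p + ‖Δ T - Δ s‖ ^ p := by
      rw [Finset.sum_range_succ, Finset.sum_range_one]
      norm_num
    have hle : ‖Δ s - Δ 0‖ ^ p ≤ SΔ := by
      have := le_csSup hbΔ hmem
      rw [hval] at this
      have := Real.rpow_nonneg (norm_nonneg (Δ T - Δ s)) p
      linarith
    have h2 : ‖Δ s - Δ 0‖ ≤ VΔ := by
      have e : ‖Δ s - Δ 0‖ = (‖Δ s - Δ 0‖ ^ p) ^ (1/p) := by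
        rw [← Real.rpow_mul (norm_nonneg _), mul_one_div_cancel hp0.ne', Real.rpow_one]
      rw [e, hVΔ]
      exact Real.rpow_le_rpow (Real.rpow_nonneg (norm_nonneg _) p) hle (by positivity)
    calc ‖Δ s‖ = ‖Δ 0 + (Δ s - Δ 0)‖ := by rw [add_sub_cancel]
      _ ≤ ‖Δ 0‖ + ‖Δ s - Δ 0‖ := norm_add_le _ _
      _ ≤ K := by
          rw [hK]
          have : ‖Δ 0‖ = ‖X 0 - Xtil 0‖ := rfl
          linarith [this ▸ le_refl (‖Δ 0‖ : ℝ), h2]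
  -- the main bound on each partition sum of Y
  have main : ∀ v ∈ pVarSums p 0 T Y, v ≤ (64 * M * W * K) ^ p := by
    rintro v ⟨N, u, ⟨humono, hu0, huN⟩, rfl⟩
    have hui : ∀ i, i ∈ Finset.range N → 0 ≤ u i ∧ u i ≤ T := by
      intro i hi
      have h1 : u 0 ≤ u i := humono (Nat.zero_le i)
      have h2 : u i ≤ u N := humono (le_of_lt (Finset.mem_range.1 hi))
      rw [hu0] at h1; rw [huN] at h2; exact ⟨h1, h2⟩
    -- per-term bound
    have step1 : ∀ i ∈ Finset.range N,
        ‖Y (u (i+1)) - Y (u i)‖ ^ p ≤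
          M ^ p * (2 ^ p * ‖Δ (u (i+1)) - Δ (u i)‖ ^ p +
            8 ^ p * K ^ p * ((u (i+1) - u i) ^ p + ‖X (u (i+1)) - X (u i)‖ ^ p +
              ((u (i+1) - u i) ^ p + ‖Xtil (u (i+1)) - Xtil (u i)‖ ^ p))) := by
      intro i hi
      set t := u (i+1) with ht
      set s := u i with hs
      have hst : s ≤ t := humono (Nat.le_succ i)
      have hsrange : 0 ≤ s ∧ s ≤ T := hui i hi
      have hk := key (t, X t) (t, Xtil t) (s, X s) (s, Xtil s)
      have n1 : ((t, X t) - (t, Xtil t) - ((s, X s) - (s, Xtil s))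
          : ℝ × EuclideanSpace ℝ (Fin n)) = ((0:ℝ), Δ t - Δ s) := by
        simp only [Prod.mk_sub_mk, Prod.mk.injEq]
        refine ⟨by ring, rfl⟩
      have n2 : ((s, X s) - (s, Xtil s) : ℝ × EuclideanSpace ℝ (Fin n)) = ((0:ℝ), Δ s) := by
        simp only [Prod.mk_sub_mk, Prod.mk.injEq]
        refine ⟨by ring, rfl⟩
      have nzero : ∀ v : EuclideanSpace ℝ (Fin n), ‖(((0:ℝ), v) : ℝ × EuclideanSpace ℝ (Fin n))‖ = ‖v‖ := by
        intro v
        rw [Prod.norm_def]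
        simp [max_eq_right (norm_nonneg v)]
      have hts0 : (0:ℝ) ≤ t - s := sub_nonneg.2 hst
      have prodnorm : ∀ (a : ℝ) (v : EuclideanSpace ℝ (Fin n)),
          ‖((a, v) : ℝ × EuclideanSpace ℝ (Fin n))‖ = max |a| ‖v‖ := by
        intro a v
        rw [Prod.norm_def]
        rfl
      have n3 : ‖((t, X t) - (s, X s) : ℝ × EuclideanSpace ℝ (Fin n))‖ ≤
          (t - s) + ‖X t - X s‖ := by
        rw [Prod.mk_sub_mk, prodnorm, abs_of_nonneg hts0]
        exact max_le (by linarith [norm_nonneg (X t - X s)])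
          (by linarith [norm_nonneg (X t - X s)])
      have n4 : ‖((t, Xtil t) - (s, Xtil s) : ℝ × EuclideanSpace ℝ (Fin n))‖ ≤
          (t - s) + ‖Xtil t - Xtil s‖ := by
        rw [Prod.mk_sub_mk, prodnorm, abs_of_nonneg hts0]
        exact max_le (by linarith [norm_nonneg (Xtil t - Xtil s)])
          (by linarith [norm_nonneg (Xtil t - Xtil s)])
      rw [n1, n2, nzero, nzero] at hk
      have hYts : Y t - Y s = σ (t, X t) - σ (t, Xtil t) - (σ (s, X s) - σ (s, Xtil s)) := rfl
      have hstep : ‖Y t - Y s‖ ≤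
          M * ‖Δ t - Δ s‖ + M * (((t - s) + ‖X t - X s‖) + ((t - s) + ‖Xtil t - Xtil s‖)) * K := by
        rw [hYts]
        refine le_trans hk ?_
        have hb1 : ‖((t, X t) - (s, X s) : ℝ × EuclideanSpace ℝ (Fin n))‖ +
            ‖((t, Xtil t) - (s, Xtil s) : ℝ × EuclideanSpace ℝ (Fin n))‖ ≤
            ((t - s) + ‖X t - X s‖) + ((t - s) + ‖Xtil t - Xtil s‖) := add_le_add n3 n4
        have hb2 : ‖Δ s‖ ≤ K := hKpt s hsrange.1 hsrange.2
        have hbnn : (0:ℝ) ≤ M * (((t - s) + ‖X t - X s‖) + ((t - s) + ‖Xtil t - Xtil s‖)) :=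
          mul_nonneg hM0
            (by linarith [norm_nonneg (X t - X s), norm_nonneg (Xtil t - Xtil s)])
        have := mul_le_mul (mul_le_mul_of_nonneg_left hb1 hM0) hb2 (norm_nonneg _) hbnn
        linarith
      calc ‖Y t - Y s‖ ^ p
          ≤ (M * ‖Δ t - Δ s‖ +
              M * (((t - s) + ‖X t - X s‖) + ((t - s) + ‖Xtil t - Xtil s‖)) * K) ^ p :=
            Real.rpow_le_rpow (norm_nonneg _) hstep hpn
        _ ≤ _ := term_bound hp hM0 (norm_nonneg _) hKnn hts0 (norm_nonneg _)
            (norm_nonneg _)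
    -- sum up
    have sum1 : (∑ i ∈ Finset.range N, ‖Y (u (i+1)) - Y (u i)‖ ^ p) ≤
        M ^ p * (2 ^ p * (∑ i ∈ Finset.range N, ‖Δ (u (i+1)) - Δ (u i)‖ ^ p) +
          8 ^ p * K ^ p * ((∑ i ∈ Finset.range N, (u (i+1) - u i) ^ p) +
            (∑ i ∈ Finset.range N, ‖X (u (i+1)) - X (u i)‖ ^ p) +
            ((∑ i ∈ Finset.range N, (u (i+1) - u i) ^ p) +
              (∑ i ∈ Finset.range N, ‖Xtil (u (i+1)) - Xtil (u i)‖ ^ p)))) := by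
      refine le_trans (Finset.sum_le_sum step1) (le_of_eq ?_)
      simp only [Finset.mul_sum, ← Finset.sum_add_distrib]
      try exact Finset.sum_congr rfl fun i _ => by ring
    -- bounds on individual sums
    have hτsum : (∑ i ∈ Finset.range N, (u (i+1) - u i) ^ p) ≤ T ^ p := by
      have h1 := sum_rpow_le_rpow_sum hp N (fun i => u (i+1) - u i)
        (fun i => sub_nonneg.2 (humono (Nat.le_succ i)))
      have h2 : (∑ i ∈ Finset.range N, (u (i+1) - u i)) = T := by
        rw [Finset.sum_range_sub u, hu0, huN, sub_zero]
      rwa [h2] at h1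
    have hdsum : (∑ i ∈ Finset.range N, ‖Δ (u (i+1)) - Δ (u i)‖ ^ p) ≤ SΔ :=
      le_csSup hbΔ (mem_pVarSums ⟨humono, hu0, huN⟩)
    have hxsum : (∑ i ∈ Finset.range N, ‖X (u (i+1)) - X (u i)‖ ^ p) ≤ SX :=
      le_csSup hbX (mem_pVarSums ⟨humono, hu0, huN⟩)
    have hxtsum : (∑ i ∈ Finset.range N, ‖Xtil (u (i+1)) - Xtil (u i)‖ ^ p) ≤ SXt :=
      le_csSup hbXt (mem_pVarSums ⟨humono, hu0, huN⟩)
    -- final arithmetic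
    have hMp : (0:ℝ) ≤ M ^ p := Real.rpow_nonneg hM0 p
    have h2p : (0:ℝ) ≤ 2 ^ p := Real.rpow_nonneg (by norm_num) p
    have h8p : (0:ℝ) ≤ 8 ^ p := Real.rpow_nonneg (by norm_num) p
    have hKp : (0:ℝ) ≤ K ^ p := Real.rpow_nonneg hKnn p
    have hWp1 : (1:ℝ) ≤ W ^ p := Real.one_le_rpow hW1 hpn
    have hWpn : (0:ℝ) ≤ W ^ p := by linarith
    have hSΔK : SΔ ≤ K ^ p := by
      have : VΔ ≤ K := by rw [hK]; linarith [norm_nonneg (X 0 - Xtil 0)]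
      calc SΔ = VΔ ^ p := (hpow SΔ hSΔnn).symm
        _ ≤ K ^ p := Real.rpow_le_rpow hVΔnn this hpn
    have hSXW : SX ≤ W ^ p := by
      have : VX ≤ W := by rw [hW]; linarith
      calc SX = VX ^ p := (hpow SX hSXnn).symm
        _ ≤ W ^ p := Real.rpow_le_rpow hVXnn this hpn
    have hSXtW : SXt ≤ W ^ p := by
      have : VXt ≤ W := by rw [hW]; linarith
      calc SXt = VXt ^ p := (hpow SXt hSXtnn).symm
        _ ≤ W ^ p := Real.rpow_le_rpow hVXtnn this hpn
    have hTW : T ^ p ≤ W ^ p := by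
      apply Real.rpow_le_rpow hT.le _ hpn
      rw [hW]; linarith
    have h2p8p : (2:ℝ) ^ p ≤ 8 ^ p := Real.rpow_le_rpow (by norm_num) (by norm_num) hpn
    have h88p : (8:ℝ) ≤ 8 ^ p := by
      have := Real.rpow_le_rpow_of_exponent_le (by norm_num : (1:ℝ) ≤ 8) hp
      rwa [Real.rpow_one] at this
    have h64 : (64:ℝ) ^ p = 8 ^ p * 8 ^ p := by
      rw [← Real.mul_rpow (by norm_num) (by norm_num)]; norm_num
    have hRHS : (64 * M * W * K) ^ p = 64 ^ p * M ^ p * W ^ p * K ^ p := by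
      rw [Real.mul_rpow (by positivity) hKnn, Real.mul_rpow (by positivity) hWnn,
        Real.mul_rpow (by norm_num) hM0]
    refine le_trans sum1 ?_
    rw [hRHS, h64]
    have hbra : 2 ^ p * (∑ i ∈ Finset.range N, ‖Δ (u (i+1)) - Δ (u i)‖ ^ p) +
        8 ^ p * K ^ p * ((∑ i ∈ Finset.range N, (u (i+1) - u i) ^ p) +
          (∑ i ∈ Finset.range N, ‖X (u (i+1)) - X (u i)‖ ^ p) +
          ((∑ i ∈ Finset.range N, (u (i+1) - u i) ^ p) +
            (∑ i ∈ Finset.range N, ‖Xtil (u (i+1)) - Xtil (u i)‖ ^ p))) ≤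
        (2 ^ p + 4 * 8 ^ p) * (K ^ p * W ^ p) := by
      have b1 : (∑ i ∈ Finset.range N, ‖Δ (u (i+1)) - Δ (u i)‖ ^ p) ≤ K ^ p * W ^ p := by
        calc (∑ i ∈ Finset.range N, ‖Δ (u (i+1)) - Δ (u i)‖ ^ p) ≤ SΔ := hdsum
          _ ≤ K ^ p := hSΔK
          _ = K ^ p * 1 := (mul_one _).symm
          _ ≤ K ^ p * W ^ p := mul_le_mul_of_nonneg_left hWp1 hKp
      have b2 : (∑ i ∈ Finset.range N, (u (i+1) - u i) ^ p) +
          (∑ i ∈ Finset.range N, ‖X (u (i+1)) - X (u i)‖ ^ p) +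
          ((∑ i ∈ Finset.range N, (u (i+1) - u i) ^ p) +
            (∑ i ∈ Finset.range N, ‖Xtil (u (i+1)) - Xtil (u i)‖ ^ p)) ≤ 4 * W ^ p := by
        have ha := hτsum.trans hTW
        have hb := hxsum.trans hSXW
        have hc := hxtsum.trans hSXtW
        linarith
      refine le_trans (add_le_add (mul_le_mul_of_nonneg_left b1 h2p)
        (mul_le_mul_of_nonneg_left b2 (by positivity))) (le_of_eq (by ring))
    refine le_trans (mul_le_mul_of_nonneg_left hbra hMp) ?_
    calc M ^ p * ((2 ^ p + 4 * 8 ^ p) * (K ^ p * W ^ p))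
        ≤ M ^ p * ((8 ^ p * 8 ^ p) * (K ^ p * W ^ p)) := by
          have h58 : (2:ℝ) ^ p + 4 * 8 ^ p ≤ 8 ^ p * 8 ^ p := by nlinarith [h2p8p, h88p, h8p]
          exact mul_le_mul_of_nonneg_left
            (mul_le_mul_of_nonneg_right h58 (by positivity)) hMp
      _ = 8 ^ p * 8 ^ p * M ^ p * W ^ p * K ^ p := by ring
  -- conclude
  have hYmem := mem_pVarSums (X := Y) (q := p) (isPartition_single (T := T) hT.le)
  have hne : (pVarSums p 0 T Y).Nonempty := ⟨_, hYmem⟩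
  have hbY : BddAbove (pVarSums p 0 T Y) := ⟨(64 * M * W * K) ^ p, fun v hv => main v hv⟩
  have hsup_le : sSup (pVarSums p 0 T Y) ≤ (64 * M * W * K) ^ p := csSup_le hne main
  have hsup_nn : 0 ≤ sSup (pVarSums p 0 T Y) :=
    Real.sSup_nonneg (by rintro v ⟨N, u, hu, rfl⟩; exact sum_rpow_nonneg p Y u N)
  have hR0 : (0:ℝ) ≤ 64 * M * W * K :=
    mul_nonneg (mul_nonneg (mul_nonneg (by norm_num) hM0) hWnn) hKnn
  show (sSup (pVarSums p 0 T Y)) ^ (1/p) ≤ 64 * M * W * K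
  calc (sSup (pVarSums p 0 T Y)) ^ (1/p)
      ≤ ((64 * M * W * K) ^ p) ^ (1/p) :=
        Real.rpow_le_rpow hsup_nn hsup_le (by positivity)
    _ = 64 * M * W * K := by
        rw [← Real.rpow_mul hR0, mul_one_div_cancel hp0.ne', Real.rpow_one]


end
end

section
/- Let T > 0, w : [0,T]² → ℝ be a control (continuous, nonnegative, superadditive: w(s,t) + w(t,u) ≤ w(s,u) for s ≤ t ≤ u), and α > 0. Define N_{α,[0,T]}(w) via the greedy partition: τ₀ = 0, τ_{i+1} = inf{u : w(τ_i,u) ≥ α, τ_i < u ≤ T} ∧ T, and N_{α,[0,T]}(w) := sup{n : τ_n < T}. Then α · N_{α,[0,T]}(w) ≤ w(0,T). -/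
open Set

noncomputable section

/-- The greedy partition times for a control `w` at resolution `α` on `[s,t]`:
`τ₀ = s`, `τ_{i+1} = inf{u : w(τ_i,u) ≥ α, τ_i < u ≤ t} ∧ t` (with `inf ∅ = +∞`, so that
the next point is `t` when the set is empty; this is realized by inserting `t`). -/
def greedyTau (w : ℝ → ℝ → ℝ) (α s t : ℝ) : ℕ → ℝ
  | 0 => s
  | i + 1 =>
      sInf (insert t {u | α ≤ w (greedyTau w α s t i) u ∧ greedyTau w α s t i < u ∧ u ≤ t})

/-- `N_{α,[s,t]}(w) = sup{n : τ_n < t}`, the greedy-partition count. -/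
def Nalpha (w : ℝ → ℝ → ℝ) (α s t : ℝ) : ℕ :=
  sSup {n : ℕ | greedyTau w α s t n < t}

/-- For a control `w` on `[0,T]` (continuous, nonnegative, superadditive)
and `α > 0`, the greedy-partition count satisfies `α · N_{α,[0,T]}(w) ≤ w(0,T)`. -/
theorem stmt7 (T : ℝ) (hT : 0 < T) (w : ℝ → ℝ → ℝ) (α : ℝ) (hα : 0 < α)
    (hcont : ContinuousOn (fun q : ℝ × ℝ => w q.1 q.2) (Set.Icc 0 T ×ˢ Set.Icc 0 T))
    (hnonneg : ∀ s t : ℝ, 0 ≤ s → s ≤ t → t ≤ T → 0 ≤ w s t)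
    (hsuper : ∀ s t u : ℝ, 0 ≤ s → s ≤ t → t ≤ u → u ≤ T → w s t + w t u ≤ w s u) :
    α * (Nalpha w α 0 T : ℝ) ≤ w 0 T := by
  set τ := greedyTau w α 0 T with hτ
  -- membership in [0,T] and monotonicity
  have hmem : ∀ n, 0 ≤ τ n ∧ τ n ≤ τ (n+1) ∧ τ (n+1) ≤ T := by
    intro n
    induction n with
    | zero =>
      refine ⟨le_refl 0, ?_, ?_⟩
      · apply le_csInf ⟨T, mem_insert _ _⟩
        rintro b (rfl | ⟨_, hb, _⟩)
        · exact hT.le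
        · exact le_of_lt hb
      · exact csInf_le ⟨0, by rintro b (rfl | ⟨_, hb, hb'⟩); exacts [hT.le, le_trans (le_refl 0) (le_of_lt hb)]⟩ (mem_insert _ _)
    | succ n ih =>
      obtain ⟨h0, h1, h2⟩ := ih
      have h0' : 0 ≤ τ (n+1) := le_trans h0 h1
      refine ⟨h0', ?_, ?_⟩
      · apply le_csInf ⟨T, mem_insert _ _⟩
        rintro b (rfl | ⟨_, hb, _⟩)
        · exact h2
        · exact le_of_lt hb
      · exact csInf_le ⟨τ (n+1), by rintro b (rfl | ⟨_, hb, _⟩); exacts [h2, le_of_lt hb]⟩ (mem_insert _ _)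
  have h0 : ∀ n, 0 ≤ τ n := fun n => (hmem n).1
  have hmono : Monotone τ := monotone_nat_of_le_succ fun n => (hmem n).2.1
  have hle : ∀ n, τ n ≤ T := by
    intro n; cases n with
    | zero => exact hT.le
    | succ n => exact (hmem n).2.2
  -- key claim: τ(n+1) < T → α ≤ w (τ n) (τ (n+1))
  have hkey : ∀ n, τ (n+1) < T → α ≤ w (τ n) (τ (n+1)) := by
    intro n hlt
    set S : Set ℝ := {u | α ≤ w (τ n) u ∧ τ n < u ∧ u ≤ T} with hS
    have hτeq : τ (n+1) = sInf (insert T S) := by rw [hτ]; rfl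
    have hSne : S.Nonempty := by
      by_contra h
      rw [not_nonempty_iff_eq_empty] at h
      rw [hτeq, h, LawfulSingleton.insert_empty_eq, csInf_singleton] at hlt
      exact lt_irrefl T hlt
    have hSbdd : BddBelow S := ⟨τ n, fun u hu => (hu.2.1).le⟩
    have hins : sInf (insert T S) = T ⊓ sInf S := csInf_insert hSbdd hSne
    have hinf_lt : sInf S < T := by
      by_contra h
      push_neg at h
      rw [hτeq, hins, inf_eq_left.mpr h] at hlt
      exact lt_irrefl T hlt
    have hτval : τ (n+1) = sInf S := by
      rw [hτeq, hins, inf_eq_right.mpr hinf_lt.le]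
    have hm0 : 0 ≤ sInf S := le_trans (h0 n) (le_csInf hSne fun u hu => hu.2.1.le)
    have hmIcc : sInf S ∈ Icc (0:ℝ) T := ⟨hm0, hinf_lt.le⟩
    -- continuity of u ↦ w (τ n) u on Icc 0 T
    have hcf : ContinuousOn (fun u => w (τ n) u) (Icc (0:ℝ) T) := by
      have : ContinuousOn (fun u : ℝ => ((τ n, u) : ℝ × ℝ)) (Icc (0:ℝ) T) :=
        (Continuous.prodMk_right _).continuousOn
      exact hcont.comp this (fun u hu => ⟨⟨h0 n, hle n⟩, hu⟩)
    have hclos : sInf S ∈ closure S := csInf_mem_closure hSne hSbdd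
    have hsub : S ⊆ Icc (0:ℝ) T := fun u hu => ⟨le_trans (h0 n) hu.2.1.le, hu.2.2⟩
    have hcwa : ContinuousWithinAt (fun u => w (τ n) u) S (sInf S) :=
      (hcf (sInf S) hmIcc).mono hsub
    have hne : (nhdsWithin (sInf S) S).NeBot := mem_closure_iff_nhdsWithin_neBot.mp hclos
    have : α ≤ w (τ n) (sInf S) := by
      refine ge_of_tendsto hcwa ?_
      filter_upwards [self_mem_nhdsWithin] with u hu
      exact hu.1
    rwa [hτval]
  -- inductive bound
  have hbound : ∀ n, τ n < T → α * n ≤ w 0 (τ n) := by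
    intro n
    induction n with
    | zero => intro _; show α * ((0:ℕ):ℝ) ≤ w 0 0; simpa using hnonneg 0 0 le_rfl le_rfl hT.le
    | succ n ih =>
      intro hlt
      have hlt' : τ n < T := lt_of_le_of_lt (hmono (Nat.le_succ n)) hlt
      have h1 := ih hlt'
      have h2 := hkey n hlt
      have h3 := hsuper 0 (τ n) (τ (n+1)) le_rfl (h0 n) (hmono (Nat.le_succ n)) (hle (n+1))
      push_cast
      nlinarith
  have hfin : ∀ n, τ n < T → α * n ≤ w 0 T := by
    intro n hn
    have h3 := hsuper 0 (τ n) T le_rfl (h0 n) (hle n) le_rfl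
    have h4 := hnonneg (τ n) T (h0 n) (hle n) le_rfl
    linarith [hbound n hn]
  -- the set is bounded above
  have hBdd : BddAbove {n : ℕ | τ n < T} := by
    refine ⟨⌈w 0 T / α⌉₊, fun n hn => ?_⟩
    have := hfin n hn
    have hdiv : (n : ℝ) ≤ w 0 T / α := by
      rw [le_div_iff₀ hα]; linarith
    exact_mod_cast hdiv.trans (Nat.le_ceil _)
  have hNa : Nalpha w α 0 T = sSup {n : ℕ | τ n < T} := rfl
  by_cases hne : {n : ℕ | τ n < T}.Nonempty
  · have hmem' := Nat.sSup_mem hne hBdd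
    rw [hNa]
    exact hfin _ hmem'
  · rw [not_nonempty_iff_eq_empty] at hne
    rw [hNa, hne]
    simp [hnonneg 0 T le_rfl hT.le le_rfl]

end
end

section
/- Let T > 0, C ≥ 1, w₁,…,w_n be controls on [0,T], and w := C·Σ_{j=1}^n w_j. Then for any α > 0 and any interval [s,t] ⊆ [0,T], the greedy-partition count satisfies N_{α,[s,t]}(w) ≤ C(2·Σ_{j=1}^n N_{α,[s,t]}(w_j) + n). -/
open Set

noncomputable section

section Helpers

variable {T v α s t : ℝ} {vv : ℝ → ℝ → ℝ}

lemma greedyTau_succ (vv : ℝ → ℝ → ℝ) (α s t : ℝ) (i : ℕ) :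
    greedyTau vv α s t (i+1) =
      sInf (insert t {u | α ≤ vv (greedyTau vv α s t i) u ∧ greedyTau vv α s t i < u ∧ u ≤ t}) := by
  rfl

lemma ctrl_diag (hv0 : ∀ a b : ℝ, 0 ≤ a → a ≤ b → b ≤ T → 0 ≤ vv a b)
    (hvs : ∀ a b c : ℝ, 0 ≤ a → a ≤ b → b ≤ c → c ≤ T → vv a b + vv b c ≤ vv a c)
    {x : ℝ} (hx0 : 0 ≤ x) (hxT : x ≤ T) : vv x x = 0 := by
  have h1 := hv0 x x hx0 le_rfl hxT
  have h2 := hvs x x x hx0 le_rfl le_rfl hxT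
  linarith

lemma ctrl_mono_left (hv0 : ∀ a b : ℝ, 0 ≤ a → a ≤ b → b ≤ T → 0 ≤ vv a b)
    (hvs : ∀ a b c : ℝ, 0 ≤ a → a ≤ b → b ≤ c → c ≤ T → vv a b + vv b c ≤ vv a c)
    {a b c : ℝ} (ha : 0 ≤ a) (hab : a ≤ b) (hbc : b ≤ c) (hc : c ≤ T) :
    vv b c ≤ vv a c := by
  have h1 := hv0 a b ha hab (le_trans hbc hc)
  have h2 := hvs a b c ha hab hbc hc
  linarith

lemma ctrl_mono_right (hv0 : ∀ a b : ℝ, 0 ≤ a → a ≤ b → b ≤ T → 0 ≤ vv a b)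
    (hvs : ∀ a b c : ℝ, 0 ≤ a → a ≤ b → b ≤ c → c ≤ T → vv a b + vv b c ≤ vv a c)
    {a b c : ℝ} (ha : 0 ≤ a) (hab : a ≤ b) (hbc : b ≤ c) (hc : c ≤ T) :
    vv a b ≤ vv a c := by
  have h1 := hv0 b c (le_trans ha hab) hbc hc
  have h2 := hvs a b c ha hab hbc hc
  linarith

lemma ctrl_cont_right
    (hvc : ContinuousOn (fun q : ℝ × ℝ => vv q.1 q.2) (Set.Icc 0 T ×ˢ Set.Icc 0 T))
    {x : ℝ} (hx0 : 0 ≤ x) (hxT : x ≤ T) :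
    ContinuousOn (fun u => vv x u) (Icc (0:ℝ) T) := by
  have : (fun u => vv x u) = (fun q : ℝ × ℝ => vv q.1 q.2) ∘ (fun u => (x, u)) := rfl
  rw [this]
  exact hvc.comp ((continuous_const.prodMk continuous_id).continuousOn)
    (fun u hu => ⟨⟨hx0, hxT⟩, hu⟩)

/-- greedy times step bounds -/
lemma greedy_step {x : ℝ} (hx : x ≤ t) :
    x ≤ sInf (insert t {u | α ≤ vv x u ∧ x < u ∧ u ≤ t}) ∧
      sInf (insert t {u | α ≤ vv x u ∧ x < u ∧ u ≤ t}) ≤ t := by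
  have hlb : ∀ y ∈ insert t {u | α ≤ vv x u ∧ x < u ∧ u ≤ t}, x ≤ y := by
    rintro y (rfl | ⟨_, h2, _⟩)
    · exact hx
    · exact le_of_lt h2
  exact ⟨le_csInf ⟨t, mem_insert _ _⟩ hlb, csInf_le ⟨x, hlb⟩ (mem_insert _ _)⟩

lemma greedy_bounds (hst : s ≤ t) (i : ℕ) :
    s ≤ greedyTau vv α s t i ∧ greedyTau vv α s t i ≤ t := by
  induction i with
  | zero => exact ⟨le_rfl, hst⟩
  | succ i ih =>
      rw [greedyTau_succ]
      exact ⟨le_trans ih.1 (greedy_step ih.2).1, (greedy_step ih.2).2⟩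

lemma greedy_mono (hst : s ≤ t) : Monotone (greedyTau vv α s t) := by
  apply monotone_nat_of_le_succ
  intro i
  rw [greedyTau_succ]
  exact (greedy_step (greedy_bounds hst i).2).1

/-- below the next greedy time, the control is small -/
lemma greedy_between (hst : s ≤ t) {i : ℕ} {u : ℝ}
    (h1 : greedyTau vv α s t i < u) (h2 : u < greedyTau vv α s t (i+1)) :
    vv (greedyTau vv α s t i) u < α := by
  by_contra h
  push_neg at h
  set x := greedyTau vv α s t i with hxdef
  have hut : u ≤ t := le_trans h2.le (greedy_bounds hst (i+1)).2
  have hmem : u ∈ insert t {u | α ≤ vv x u ∧ x < u ∧ u ≤ t} :=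
    Or.inr ⟨h, h1, hut⟩
  have hlb : ∀ y ∈ insert t {u | α ≤ vv x u ∧ x < u ∧ u ≤ t}, x ≤ y := by
    rintro y (rfl | ⟨_, hy2, _⟩)
    · exact (greedy_bounds hst i).2
    · exact le_of_lt hy2
  have := csInf_le ⟨x, hlb⟩ hmem
  rw [← greedyTau_succ] at this
  linarith

/-- the hitting property: if the next greedy time is `< t`, the control reaches `α`. -/
lemma greedy_hit
    (hvc : ContinuousOn (fun q : ℝ × ℝ => vv q.1 q.2) (Set.Icc 0 T ×ˢ Set.Icc 0 T))
    (hs : 0 ≤ s) (hst : s ≤ t) (ht : t ≤ T) {i : ℕ}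
    (hlt : greedyTau vv α s t (i+1) < t) :
    α ≤ vv (greedyTau vv α s t i) (greedyTau vv α s t (i+1)) := by
  set x := greedyTau vv α s t i with hxdef
  have hxb := greedy_bounds (vv := vv) (α := α) hst i
  rw [← hxdef] at hxb
  set S := {u | α ≤ vv x u ∧ x < u ∧ u ≤ t} with hSdef
  have hbdd : BddBelow S := ⟨x, fun y hy => hy.2.1.le⟩
  have hSne : S.Nonempty := by
    by_contra hSe
    rw [not_nonempty_iff_eq_empty] at hSe
    have : greedyTau vv α s t (i+1) = t := by
      rw [greedyTau_succ, ← hxdef, ← hSdef, hSe, insert_empty_eq, csInf_singleton]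
    rw [this] at hlt
    exact lt_irrefl _ hlt
  have hmin : greedyTau vv α s t (i+1) = min t (sInf S) := by
    rw [greedyTau_succ, ← hxdef, ← hSdef]
    exact csInf_insert hbdd hSne
  have h2 : greedyTau vv α s t (i+1) = sInf S := by
    rcases le_total t (sInf S) with h | h
    · rw [hmin, min_eq_left h] at hlt; exact absurd hlt (lt_irrefl t)
    · rw [hmin, min_eq_right h]
  have hcl : sInf S ∈ closure S := csInf_mem_closure hSne hbdd
  have hg : ContinuousOn (fun u => vv x u) (Icc x t) :=
    (ctrl_cont_right hvc (le_trans hs hxb.1) (le_trans hxb.2 ht)).mono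
      (fun u hu => ⟨le_trans (le_trans hs hxb.1) hu.1, le_trans hu.2 ht⟩)
  have hK : IsClosed (Icc x t ∩ (fun u => vv x u) ⁻¹' (Ici α)) :=
    hg.preimage_isClosed_of_isClosed isClosed_Icc isClosed_Ici
  have hsub : S ⊆ Icc x t ∩ (fun u => vv x u) ⁻¹' (Ici α) :=
    fun y hy => ⟨⟨hy.2.1.le, hy.2.2⟩, hy.1⟩
  have hmem := (closure_minimal hsub hK) hcl
  rw [h2]
  exact hmem.2

/-- continuity limit lemma -/
lemma lim_le {g : ℝ → ℝ} {a b c : ℝ} (hab : a < b) (hg : ContinuousOn g (Icc a b))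
    (hint : ∀ u, a < u → u < b → g u ≤ c) : g b ≤ c := by
  have h1 : ContinuousWithinAt g (Icc a b) b := hg b (right_mem_Icc.2 hab.le)
  have h2 : Filter.Tendsto g (nhdsWithin b (Ioo a b)) (nhds (g b)) :=
    (h1.mono Ioo_subset_Icc_self)
  have hne : (nhdsWithin b (Ioo a b)).NeBot := by
    rw [nhdsWithin_Ioo_eq_nhdsLT hab]; infer_instance
  exact le_of_tendsto h2 (eventually_nhdsWithin_of_forall (fun u hu => hint u hu.1 hu.2))

/-- telescoping sum bound -/
lemma tel {f : ℕ → ℝ}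
    (hv0 : ∀ a b : ℝ, 0 ≤ a → a ≤ b → b ≤ T → 0 ≤ vv a b)
    (hvs : ∀ a b c : ℝ, 0 ≤ a → a ≤ b → b ≤ c → c ≤ T → vv a b + vv b c ≤ vv a c)
    (hs : 0 ≤ s) (ht : t ≤ T)
    (hmono : Monotone f) (hfb : ∀ i, s ≤ f i ∧ f i ≤ t)
    {a b : ℕ} (hab : a ≤ b) :
    ∑ i ∈ Finset.Ico a b, vv (f i) (f (i+1)) ≤ vv (f a) (f b) := by
  induction b, hab using Nat.le_induction with
  | base =>
      simp only [Finset.Ico_self, Finset.sum_empty]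
      exact hv0 (f a) (f a) (le_trans hs (hfb a).1) le_rfl (le_trans (hfb a).2 ht)
  | succ b hab ih =>
      rw [Finset.sum_Ico_succ_top hab]
      have h3 := hvs (f a) (f b) (f (b+1)) (le_trans hs (hfb a).1) (hmono hab)
        (hmono (Nat.le_succ b)) (le_trans (hfb (b+1)).2 ht)
      linarith



/-- test keyQ standalone (with tel as hypothesis-style) -/
lemma keyQ {f σ : ℕ → ℝ} {N Nj : ℕ}
    (hα : 0 < α) (hs : 0 ≤ s) (ht : t ≤ T)
    (hv0 : ∀ a b : ℝ, 0 ≤ a → a ≤ b → b ≤ T → 0 ≤ vv a b)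
    (hvs : ∀ a b c : ℝ, 0 ≤ a → a ≤ b → b ≤ c → c ≤ T → vv a b + vv b c ≤ vv a c)
    (hf : Monotone f) (hfb : ∀ i, s ≤ f i ∧ f i ≤ t) (hfN : f N < t)
    (htel : ∀ a b : ℕ, a ≤ b →
      ∑ i ∈ Finset.Ico a b, vv (f i) (f (i+1)) ≤ vv (f a) (f b))
    (hterm : ∀ i, i < N → vv (f i) (f (i+1)) ≤ α)
    (hblock : ∀ k : ℕ, ∀ u w' : ℝ, σ k ≤ u → u ≤ w' → w' ≤ σ (k+1) → vv u w' ≤ α)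
    (hσtop : t ≤ σ (Nj+1)) :
    ∀ d, d ≤ Nj → ∀ i0, i0 ≤ N → σ (Nj - d) ≤ f i0 →
      ∑ i ∈ Finset.Ico i0 N, vv (f i) (f (i+1)) ≤ (2*(d:ℝ)+1) * α := by
  intro d
  induction d with
  | zero =>
      intro _ i0 hi0N hσi0
      have h1 : ∑ i ∈ Finset.Ico i0 N, vv (f i) (f (i+1)) ≤ vv (f i0) (f N) := htel i0 N hi0N
      have h2 : vv (f i0) (f N) ≤ α := by
        refine hblock Nj (f i0) (f N) ?_ (hf hi0N) (le_trans hfN.le hσtop)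
        simpa using hσi0
      push_cast
      linarith
  | succ d IH =>
      intro hd1 i0 hi0N hσi0
      set k := Nj - (d+1) with hkdef
      have hkk : Nj - d = k + 1 := by omega
      by_cases hA : f N ≤ σ (k+1)
      · have h1 : ∑ i ∈ Finset.Ico i0 N, vv (f i) (f (i+1)) ≤ vv (f i0) (f N) := htel i0 N hi0N
        have h2 : vv (f i0) (f N) ≤ α := hblock k (f i0) (f N) hσi0 (hf hi0N) hA
        push_cast
        nlinarith
      · push_neg at hA
        have hex : ∃ i, σ (k+1) ≤ f i := ⟨N, hA.le⟩
        set i1 := Nat.find hex with hi1def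
        have hi1 : σ (k+1) ≤ f i1 := Nat.find_spec hex
        have hi1N : i1 ≤ N := Nat.find_min' hex hA.le
        by_cases hcmp : i1 ≤ i0
        · have := IH (by omega) i0 hi0N (by rw [hkk]; exact le_trans hi1 (hf hcmp))
          push_cast at this ⊢
          nlinarith
        · push_neg at hcmp
          set p := i1 - 1 with hpdef
          have hpp : p + 1 = i1 := by omega
          have hpN : p < N := by omega
          have h0p : i0 ≤ p := by omega
          have hfp : f p < σ (k+1) := by
            have hplt : p < i1 := by omega
            have hmin := Nat.find_min hex (m := p) (hi1def ▸ hplt)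
            push_neg at hmin
            exact hmin
          rw [← Finset.sum_Ico_consecutive _ (show i0 ≤ p+1 by omega) (show p+1 ≤ N by omega),
            Finset.sum_Ico_succ_top h0p]
          have hS1 : ∑ i ∈ Finset.Ico i0 p, vv (f i) (f (i+1)) ≤ vv (f i0) (f p) := htel i0 p h0p
          have hS1' : vv (f i0) (f p) ≤ α := hblock k (f i0) (f p) hσi0 (hf h0p) hfp.le
          have hS2 : vv (f p) (f (p+1)) ≤ α := hterm p hpN
          have hS3 : ∑ i ∈ Finset.Ico (p+1) N, vv (f i) (f (i+1)) ≤ (2*(d:ℝ)+1) * α := by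
            refine IH (by omega) (p+1) (by omega) ?_
            rw [hkk, hpp]
            exact hi1
          push_cast
          linarith

/-- boundedness of the greedy count set -/
lemma greedy_bdd
    (hv0 : ∀ a b : ℝ, 0 ≤ a → a ≤ b → b ≤ T → 0 ≤ vv a b)
    (hvs : ∀ a b c : ℝ, 0 ≤ a → a ≤ b → b ≤ c → c ≤ T → vv a b + vv b c ≤ vv a c)
    (hvc : ContinuousOn (fun q : ℝ × ℝ => vv q.1 q.2) (Set.Icc 0 T ×ˢ Set.Icc 0 T))
    (hα : 0 < α) (hs : 0 ≤ s) (hst : s ≤ t) (ht : t ≤ T) :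
    BddAbove {n : ℕ | greedyTau vv α s t n < t} := by
  set τ := greedyTau vv α s t with hτdef
  refine ⟨⌈vv s t / α⌉₊, fun n hn => ?_⟩
  simp only [mem_setOf_eq] at hn
  have hkey : (n : ℝ) * α ≤ vv s t := by
    have hterm : ∀ i ∈ Finset.Ico 0 n, α ≤ vv (τ i) (τ (i+1)) := by
      intro i hi
      simp only [Finset.mem_Ico] at hi
      refine greedy_hit hvc hs hst ht ?_
      exact lt_of_le_of_lt (greedy_mono hst (by omega : i + 1 ≤ n)) hn
    have h1 : (n : ℝ) * α ≤ ∑ i ∈ Finset.Ico 0 n, vv (τ i) (τ (i+1)) := by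
      calc (n : ℝ) * α = ∑ _i ∈ Finset.Ico 0 n, α := by
            rw [Finset.sum_const, Nat.card_Ico, Nat.sub_zero, nsmul_eq_mul, mul_comm]
        _ ≤ _ := Finset.sum_le_sum hterm
    have h2 : ∑ i ∈ Finset.Ico 0 n, vv (τ i) (τ (i+1)) ≤ vv (τ 0) (τ n) :=
      tel hv0 hvs hs ht (greedy_mono hst) (greedy_bounds hst) (Nat.zero_le n)
    have h3 : vv (τ 0) (τ n) ≤ vv s t := by
      have : τ 0 = s := rfl
      rw [this]
      exact ctrl_mono_right hv0 hvs hs (greedy_bounds hst n).1 (greedy_bounds hst n).2 ht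
    linarith
  have : (n : ℝ) ≤ vv s t / α := by
    rw [le_div_iff₀ hα]; exact hkey
  exact_mod_cast this.trans (Nat.le_ceil _)

end Helpers

/-- If `w₁,…,w_n` are controls on `[0,T]`, `C ≥ 1`, and
`w = C·Σⱼ wⱼ`, then for any `α > 0` and `[s,t] ⊆ [0,T]`,
`N_{α,[s,t]}(w) ≤ C(2·Σⱼ N_{α,[s,t]}(wⱼ) + n)`. -/
theorem stmt8 (T : ℝ) (hT : 0 < T) (n : ℕ) (C : ℝ) (hC : 1 ≤ C)
    (wj : Fin n → ℝ → ℝ → ℝ)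
    (hcont : ∀ j, ContinuousOn (fun q : ℝ × ℝ => wj j q.1 q.2) (Set.Icc 0 T ×ˢ Set.Icc 0 T))
    (hnonneg : ∀ j, ∀ s t : ℝ, 0 ≤ s → s ≤ t → t ≤ T → 0 ≤ wj j s t)
    (hsuper : ∀ j, ∀ s t u : ℝ, 0 ≤ s → s ≤ t → t ≤ u → u ≤ T →
      wj j s t + wj j t u ≤ wj j s u)
    (α : ℝ) (hα : 0 < α)
    (s t : ℝ) (hs : 0 ≤ s) (hst : s ≤ t) (ht : t ≤ T) :
    (Nalpha (fun a b => C * ∑ j, wj j a b) α s t : ℝ) ≤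
      C * (2 * ∑ j, (Nalpha (wj j) α s t : ℝ) + n) := by
  have hC0 : (0:ℝ) < C := lt_of_lt_of_le one_pos hC
  set w : ℝ → ℝ → ℝ := fun a b => C * ∑ j, wj j a b with hwdef
  have hw0 : ∀ a b : ℝ, 0 ≤ a → a ≤ b → b ≤ T → 0 ≤ w a b := by
    intro a b h1 h2 h3
    exact mul_nonneg hC0.le (Finset.sum_nonneg fun j _ => hnonneg j a b h1 h2 h3)
  have hws : ∀ a b c : ℝ, 0 ≤ a → a ≤ b → b ≤ c → c ≤ T → w a b + w b c ≤ w a c := by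
    intro a b c h1 h2 h3 h4
    have hsum : ∑ j, wj j a b + ∑ j, wj j b c ≤ ∑ j, wj j a c := by
      rw [← Finset.sum_add_distrib]
      exact Finset.sum_le_sum fun j _ => hsuper j a b c h1 h2 h3 h4
    have := mul_le_mul_of_nonneg_left hsum hC0.le
    simp only [hwdef]
    nlinarith
  have hwc : ContinuousOn (fun q : ℝ × ℝ => w q.1 q.2) (Set.Icc 0 T ×ˢ Set.Icc 0 T) := by
    simp only [hwdef]
    exact continuousOn_const.mul (continuousOn_finset_sum _ fun j _ => hcont j)
  set τ := greedyTau w α s t with hτdef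
  set N := Nalpha w α s t with hNdef
  have hRHS0 : (0:ℝ) ≤ C * (2 * ∑ j, (Nalpha (wj j) α s t : ℝ) + n) := by
    apply mul_nonneg hC0.le
    have : (0:ℝ) ≤ ∑ j, (Nalpha (wj j) α s t : ℝ) :=
      Finset.sum_nonneg fun j _ => Nat.cast_nonneg _
    positivity
  rcases Nat.eq_zero_or_pos N with hN0 | hNpos
  · rw [hN0]; exact_mod_cast hRHS0
  · have hbdd : BddAbove {n' : ℕ | τ n' < t} := greedy_bdd hw0 hws hwc hα hs hst ht
    have hsup : sSup {n' : ℕ | τ n' < t} = N := by rw [hNdef]; rfl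
    have hne : {n' : ℕ | τ n' < t}.Nonempty := by
      by_contra h
      rw [not_nonempty_iff_eq_empty] at h
      have h0 : N = 0 := by rw [← hsup, h, csSup_empty]; rfl
      omega
    have hNmem : τ N < t := by
      have := Nat.sSup_mem hne hbdd
      rwa [hsup] at this
    have hslt : s < t := lt_of_le_of_lt (greedy_bounds hst N).1 hNmem
    -- Step 1 : N·α ≤ ∑ w-terms
    have hterm1 : ∀ i ∈ Finset.Ico 0 N, α ≤ w (τ i) (τ (i+1)) := by
      intro i hi
      simp only [Finset.mem_Ico] at hi
      refine greedy_hit hwc hs hst ht ?_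
      exact lt_of_le_of_lt (greedy_mono hst (by omega : i + 1 ≤ N)) hNmem
    have hstep1 : (N : ℝ) * α ≤ ∑ i ∈ Finset.Ico 0 N, w (τ i) (τ (i+1)) := by
      calc (N : ℝ) * α = ∑ _i ∈ Finset.Ico 0 N, α := by
            rw [Finset.sum_const, Nat.card_Ico, Nat.sub_zero, nsmul_eq_mul, mul_comm]
        _ ≤ _ := Finset.sum_le_sum hterm1
    -- per-j bound
    have hj : ∀ j, ∑ i ∈ Finset.Ico 0 N, wj j (τ i) (τ (i+1)) ≤
        (2 * (Nalpha (wj j) α s t : ℝ) + 1) * α := by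
      intro j
      set σ := greedyTau (wj j) α s t with hσdef
      set Nj := Nalpha (wj j) α s t with hNjdef
      have hbddj : BddAbove {n' : ℕ | σ n' < t} :=
        greedy_bdd (hnonneg j) (hsuper j) (hcont j) hα hs hst ht
      have hsupj : sSup {n' : ℕ | σ n' < t} = Nj := by rw [hNjdef]; rfl
      have hnej : {n' : ℕ | σ n' < t}.Nonempty := ⟨0, hslt⟩
      have hNjtop : t ≤ σ (Nj + 1) := by
        by_contra h
        push_neg at h
        have hmem : Nj + 1 ∈ {n' : ℕ | σ n' < t} := h
        have := le_csSup hbddj hmem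
        rw [hsupj] at this
        omega
      -- hterm for wj j
      have hterm : ∀ i, i < N → wj j (τ i) (τ (i+1)) ≤ α := by
        intro i hiN
        have hτlt : τ (i+1) < t :=
          lt_of_le_of_lt (greedy_mono hst (by omega : i + 1 ≤ N)) hNmem
        have h0τ : 0 ≤ τ i := le_trans hs (greedy_bounds hst i).1
        have hτT : τ i ≤ T := le_trans (greedy_bounds hst i).2 ht
        have hτi : τ i < τ (i+1) := by
          have hhit : α ≤ w (τ i) (τ (i+1)) := greedy_hit hwc hs hst ht hτlt
          have hle : τ i ≤ τ (i+1) := greedy_mono hst (Nat.le_succ i)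
          rcases lt_or_eq_of_le hle with h | h
          · exact h
          · exfalso
            rw [← h] at hhit
            have := ctrl_diag hw0 hws h0τ hτT
            linarith
        have hint : ∀ u, τ i < u → u < τ (i+1) → wj j (τ i) u ≤ α := by
          intro u h1 h2
          have hw_small : w (τ i) u < α := greedy_between hst h1 h2
          have huT : u ≤ T := le_trans (le_trans h2.le (greedy_bounds hst (i+1)).2) ht
          have hsum : wj j (τ i) u ≤ ∑ k, wj k (τ i) u :=
            Finset.single_le_sum (fun k _ => hnonneg k (τ i) u h0τ h1.le huT)
              (Finset.mem_univ j)
          have hSig0 : (0:ℝ) ≤ ∑ k, wj k (τ i) u :=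
            Finset.sum_nonneg fun k _ => hnonneg k (τ i) u h0τ h1.le huT
          have hsum2 : ∑ k, wj k (τ i) u ≤ w (τ i) u := by
            simp only [hwdef]
            nlinarith
          linarith
        have hg : ContinuousOn (fun u => wj j (τ i) u) (Icc (τ i) (τ (i+1))) :=
          (ctrl_cont_right (hcont j) h0τ hτT).mono
            (fun u hu => ⟨le_trans h0τ hu.1,
              le_trans hu.2 (le_trans (greedy_bounds hst (i+1)).2 ht)⟩)
        exact lim_le hτi hg hint
      -- hblock for wj j
      have hblock : ∀ k : ℕ, ∀ u w' : ℝ, σ k ≤ u → u ≤ w' → w' ≤ σ (k+1) →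
          wj j u w' ≤ α := by
        intro k u w' h1 h2 h3
        have hσb := greedy_bounds (vv := wj j) (α := α) hst k
        have hσb1 := greedy_bounds (vv := wj j) (α := α) hst (k+1)
        have h0 : 0 ≤ σ k := le_trans hs hσb.1
        have hw'T : w' ≤ T := le_trans (le_trans h3 hσb1.2) ht
        have hmono1 : wj j u w' ≤ wj j (σ k) w' :=
          ctrl_mono_left (hnonneg j) (hsuper j) h0 h1 h2 hw'T
        refine le_trans hmono1 ?_
        have hk : σ k ≤ w' := le_trans h1 h2
        rcases eq_or_lt_of_le hk with heq | hlt
        · rw [← heq, ctrl_diag (hnonneg j) (hsuper j) h0 (le_trans hσb.2 ht)]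
          exact hα.le
        · rcases lt_or_eq_of_le h3 with h3' | h3'
          · exact (greedy_between hst hlt h3').le
          · have hglt : σ k < σ (k+1) := by rw [← h3']; exact hlt
            have hg : ContinuousOn (fun u' => wj j (σ k) u') (Icc (σ k) (σ (k+1))) :=
              (ctrl_cont_right (hcont j) h0 (le_trans hσb.2 ht)).mono
                (fun u' hu => ⟨le_trans h0 hu.1, le_trans hu.2 (le_trans hσb1.2 ht)⟩)
            rw [h3']
            exact lim_le hglt hg (fun u' hu1 hu2 => (greedy_between hst hu1 hu2).le)
      have := keyQ hα hs ht (hnonneg j) (hsuper j) (greedy_mono hst) (greedy_bounds hst)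
        hNmem
        (fun a b hab => tel (hnonneg j) (hsuper j) hs ht (greedy_mono hst)
          (greedy_bounds hst) hab)
        hterm hblock hNjtop Nj le_rfl 0 (Nat.zero_le N) (by
          rw [Nat.sub_self]
          exact le_rfl)
      exact this
    -- combine
    have hswap : ∑ i ∈ Finset.Ico 0 N, w (τ i) (τ (i+1)) =
        C * ∑ j, ∑ i ∈ Finset.Ico 0 N, wj j (τ i) (τ (i+1)) := by
      simp only [hwdef]
      rw [← Finset.mul_sum, Finset.sum_comm]
    have hsum_le : ∑ j, ∑ i ∈ Finset.Ico 0 N, wj j (τ i) (τ (i+1)) ≤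
        ∑ j, (2 * (Nalpha (wj j) α s t : ℝ) + 1) * α :=
      Finset.sum_le_sum fun j _ => hj j
    have hSigeq : ∑ j, (2 * (Nalpha (wj j) α s t : ℝ) + 1) * α =
        (2 * ∑ j, (Nalpha (wj j) α s t : ℝ) + n) * α := by
      rw [← Finset.sum_mul]
      congr 1
      rw [Finset.sum_add_distrib, ← Finset.mul_sum]
      simp [Finset.card_univ]
    have hfinal : (N : ℝ) * α ≤ (C * (2 * ∑ j, (Nalpha (wj j) α s t : ℝ) + n)) * α := by
      calc (N : ℝ) * α ≤ ∑ i ∈ Finset.Ico 0 N, w (τ i) (τ (i+1)) := hstep1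
        _ = C * ∑ j, ∑ i ∈ Finset.Ico 0 N, wj j (τ i) (τ (i+1)) := hswap
        _ ≤ C * ((2 * ∑ j, (Nalpha (wj j) α s t : ℝ) + n) * α) := by
            rw [← hSigeq]
            exact mul_le_mul_of_nonneg_left hsum_le hC0.le
        _ = (C * (2 * ∑ j, (Nalpha (wj j) α s t : ℝ) + n)) * α := by ring
    exact le_of_mul_le_mul_right hfinal hα


end
end
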